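/- arXiv:2506.20943 — 5 statements merged into one kernel-verified Lean document; each statement's English description precedes it below -/
import Mathlib

section
/- Let N ≥ 2 be an integer, 0 < s1 < 1 with N > 2·s1, and let p, q be reals with 2 < q < 2 + 4·s1/N < p < 2N/(N − 2·s1). Let a, μ, Cp, Cq > 0 satisfy condition (A1): μ · a^{q − N(q−2)/(2s1) + (p − N(p−2)/(2s1))·(4s1 − N(q−2))/(N(p−2) − 4s1)} < ( p(4s1 − N(q−2)) / (2N·Cp·(p−q)) )^{(4s1 − N(q−2))/(N(p−2) − 4s1)} · ( (N(p−2) − 4s1) / (2N(p−q)) ) · q/Cq. Define h : (0,∞) → ℝ by h(t) = (1/2)t² − (Cp/p)·a^{p − N(p−2)/(2s1)}·t^{N(p−2)/(2s1)} − (μ·Cq/q)·a^{q − N(q−2)/(2s1)}·t^{N(q−2)/(2s1)}. Then there exist 0 < R0 < R1 such that h(R0) = 0 = h(R1), and for t > 0 one has h(t) > 0 if and only if t ∈ (R0, R1); moreover h has exactly two critical points on (0,∞): a strict local minimum point t₁ ∈ (0, R0) with h(t₁) < 0, and a strict global maximum point t₂ ∈ (R0, R1) with h(t₂) > 0. -/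
open Real Set

/-!
With `α`, `β` the two Gagliardo–Nirenberg exponents (`0 < β < 2 < α`), `h t = t ^ β * Φ t` and
`h' t = t ^ (β - 1) * Ψ t`, where `Φ` and `Ψ` both have the shape `k t ^ d - c t ^ (d + e) - C`
with `d = 2 - β`, `e = α - 2`. Such a function is negative at `0`, tends to `-∞`, and is strictly
increasing then strictly decreasing, so it is positive exactly between two zeros as soon as it is
positive somewhere. For `Φ` this is (A1), evaluated at the maximiser of `t ^ d / 2 - A t ^ (d + e)`;
for `Ψ` it follows from the mean value theorem, since `h` increases somewhere after its first
zero. The sign patterns `- + -` of `h` and of `h'` on `(0, ∞)` then force the geometry.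
-/

structure PosExactlyBetween (g : ℝ → ℝ) (r₀ r₁ : ℝ) : Prop where
  pos : 0 < r₀
  lt : r₀ < r₁
  left_eq_zero : g r₀ = 0
  right_eq_zero : g r₁ = 0
  neg_of_lt : ∀ ⦃t⦄, 0 < t → t < r₀ → g t < 0
  pos_of_mem : ∀ ⦃t⦄, r₀ < t → t < r₁ → 0 < g t
  neg_of_gt : ∀ ⦃t⦄, r₁ < t → g t < 0

namespace PosExactlyBetween

variable {g f w : ℝ → ℝ} {r₀ r₁ t : ℝ}

lemma nonpos_of_le (hg : PosExactlyBetween g r₀ r₁) (ht : 0 < t) (h : t ≤ r₀) : g t ≤ 0 := by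
  rcases h.lt_or_eq with h | rfl
  · exact (hg.neg_of_lt ht h).le
  · exact hg.left_eq_zero.le

lemma nonpos_of_ge (hg : PosExactlyBetween g r₀ r₁) (h : r₁ ≤ t) : g t ≤ 0 := by
  rcases h.lt_or_eq with h | rfl
  · exact (hg.neg_of_gt h).le
  · exact hg.right_eq_zero.le

lemma pos_iff (hg : PosExactlyBetween g r₀ r₁) (ht : 0 < t) : 0 < g t ↔ t ∈ Ioo r₀ r₁ :=
  ⟨fun hpos => ⟨lt_of_not_ge fun h => (hg.nonpos_of_le ht h).not_gt hpos,
      lt_of_not_ge fun h => (hg.nonpos_of_ge h).not_gt hpos⟩,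
    fun hmem => hg.pos_of_mem hmem.1 hmem.2⟩

lemma eq_zero_iff (hg : PosExactlyBetween g r₀ r₁) (ht : 0 < t) : g t = 0 ↔ t = r₀ ∨ t = r₁ := by
  refine ⟨fun h0 => ?_, by rintro (rfl | rfl); exacts [hg.left_eq_zero, hg.right_eq_zero]⟩
  rcases lt_trichotomy t r₀ with h₀ | rfl | h₀
  · exact absurd h0 (hg.neg_of_lt ht h₀).ne
  · exact .inl rfl
  rcases lt_trichotomy t r₁ with h₁ | rfl | h₁
  · exact absurd h0 (hg.pos_of_mem h₀ h₁).ne'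
  · exact .inr rfl
  · exact absurd h0 (hg.neg_of_gt h₁).ne

lemma of_eq_mul (hg : PosExactlyBetween g r₀ r₁) (hw : ∀ t, 0 < t → 0 < w t)
    (hf : ∀ t, 0 < t → f t = w t * g t) : PosExactlyBetween f r₀ r₁ where
  pos := hg.pos
  lt := hg.lt
  left_eq_zero := by rw [hf _ hg.pos, hg.left_eq_zero, mul_zero]
  right_eq_zero := by rw [hf _ (hg.pos.trans hg.lt), hg.right_eq_zero, mul_zero]
  neg_of_lt t ht h := by
    rw [hf t ht]; exact mul_neg_of_pos_of_neg (hw t ht) (hg.neg_of_lt ht h)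
  pos_of_mem t h₀ h₁ := by
    have ht := hg.pos.trans h₀
    rw [hf t ht]; exact mul_pos (hw t ht) (hg.pos_of_mem h₀ h₁)
  neg_of_gt t h := by
    have ht := hg.pos.trans (hg.lt.trans h)
    rw [hf t ht]; exact mul_neg_of_pos_of_neg (hw t ht) (hg.neg_of_gt h)

lemma exists_deriv_pos (hg : PosExactlyBetween g r₀ r₁)
    (hd : ∀ t, 0 < t → DifferentiableAt ℝ g t) : ∃ c, 0 < c ∧ 0 < deriv g c := by
  obtain ⟨M, hM₀, hM₁⟩ := exists_between hg.lt
  have hd' : ∀ t ∈ Icc r₀ M, DifferentiableAt ℝ g t :=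
    fun t ht => hd t (hg.pos.trans_le ht.1)
  obtain ⟨c, hc, hslope⟩ := exists_deriv_eq_slope g hM₀
    (fun t ht => (hd' t ht).continuousAt.continuousWithinAt)
    (fun t ht => (hd' t (Ioo_subset_Icc_self ht)).differentiableWithinAt)
  refine ⟨c, hg.pos.trans hc.1, ?_⟩
  rw [hslope, hg.left_eq_zero, sub_zero]
  exact div_pos (hg.pos_of_mem hM₀ hM₁) (sub_pos.2 hM₀)

lemma strictAntiOn_Ioc_of_deriv (hg' : PosExactlyBetween (deriv g) r₀ r₁)
    (hc : ContinuousOn g (Ioi 0)) : StrictAntiOn g (Ioc 0 r₀) := by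
  refine strictAntiOn_of_deriv_neg (convex_Ioc 0 r₀) (hc.mono Ioc_subset_Ioi_self) ?_
  rw [interior_Ioc]
  exact fun t ht => hg'.neg_of_lt ht.1 ht.2

lemma strictMonoOn_Icc_of_deriv (hg' : PosExactlyBetween (deriv g) r₀ r₁)
    (hc : ContinuousOn g (Ioi 0)) : StrictMonoOn g (Icc r₀ r₁) := by
  refine strictMonoOn_of_deriv_pos (convex_Icc r₀ r₁)
    (hc.mono fun t ht => hg'.pos.trans_le ht.1) ?_
  rw [interior_Icc]
  exact fun t ht => hg'.pos_of_mem ht.1 ht.2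

lemma strictAntiOn_Ici_of_deriv (hg' : PosExactlyBetween (deriv g) r₀ r₁)
    (hc : ContinuousOn g (Ioi 0)) : StrictAntiOn g (Ici r₁) := by
  refine strictAntiOn_of_deriv_neg (convex_Ici r₁)
    (hc.mono fun t ht => (hg'.pos.trans hg'.lt).trans_le ht) ?_
  rw [interior_Ici]
  exact fun t ht => hg'.neg_of_gt ht

end PosExactlyBetween

theorem exists_mountain_pass_geometry {g : ℝ → ℝ} {R₀ R₁ t₁ t₂ : ℝ}
    (hg : PosExactlyBetween g R₀ R₁) (hg' : PosExactlyBetween (deriv g) t₁ t₂)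
    (hc : ContinuousOn g (Ioi 0)) :
    ∃ R0 R1 t1 t2 : ℝ, 0 < R0 ∧ R0 < R1 ∧ g R0 = 0 ∧ g R1 = 0 ∧
      (∀ t : ℝ, 0 < t → (0 < g t ↔ t ∈ Set.Ioo R0 R1)) ∧
      (deriv g t1 = 0 ∧ deriv g t2 = 0 ∧
        ∀ t : ℝ, 0 < t → deriv g t = 0 → t = t1 ∨ t = t2) ∧
      (t1 ∈ Set.Ioo 0 R0 ∧
        (∃ ε > 0, ∀ t ∈ Set.Ioo (t1 - ε) (t1 + ε), t ≠ t1 → g t1 < g t) ∧ g t1 < 0) ∧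
      (t2 ∈ Set.Ioo R0 R1 ∧ (∀ t : ℝ, 0 < t → t ≠ t2 → g t < g t2) ∧ 0 < g t2) := by
  have hanti₁ := hg'.strictAntiOn_Ioc_of_deriv hc
  have hmono := hg'.strictMonoOn_Icc_of_deriv hc
  have hanti₂ := hg'.strictAntiOn_Ici_of_deriv hc
  have ht₁ := hg'.pos
  have ht₁₂ := hg'.lt
  have hneg : ∀ t ∈ Ioc 0 t₁, g t < 0 := by
    intro t ht
    have hs : 0 < min t R₀ / 2 := by have := lt_min ht.1 hg.pos; positivity
    have hst : min t R₀ / 2 < t := by linarith [min_le_left t R₀]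
    have hsR : min t R₀ / 2 < R₀ := by linarith [min_le_right t R₀, hg.pos]
    exact (hanti₁ ⟨hs, hst.le.trans ht.2⟩ ht hst).trans (hg.neg_of_lt hs hsR)
  obtain ⟨M, hR₀M, hMR₁⟩ := exists_between hg.lt
  have hM : 0 < g M := hg.pos_of_mem hR₀M hMR₁
  have ht₁M : t₁ < M := lt_of_not_ge fun h => (hneg M ⟨hg.pos.trans hR₀M, h⟩).not_gt hM
  have ht₁R₀ : t₁ < R₀ := by
    by_contra! h
    have : 0 ≤ g t₁ := by
      rcases h.lt_or_eq with h | rfl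
      · exact (hg.pos_of_mem h (ht₁M.trans hMR₁)).le
      · exact hg.left_eq_zero.ge
    exact (hneg t₁ ⟨ht₁, le_rfl⟩).not_ge this
  have ht₂_pos : 0 < g t₂ := by
    rcases le_or_gt M t₂ with h | h
    · exact hM.trans_le (hmono.monotoneOn ⟨ht₁M.le, h⟩ ⟨ht₁₂.le, le_rfl⟩ h)
    · exact hM.trans (hanti₂ (mem_Ici.2 le_rfl) h.le h)
  refine ⟨R₀, R₁, t₁, t₂, hg.pos, hg.lt, hg.left_eq_zero, hg.right_eq_zero,
    fun t ht => hg.pos_iff ht, ⟨hg'.left_eq_zero, hg'.right_eq_zero,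
    fun t ht => (hg'.eq_zero_iff ht).1⟩, ⟨⟨ht₁, ht₁R₀⟩, ?_, hneg t₁ ⟨ht₁, le_rfl⟩⟩,
    ⟨(hg.pos_iff (ht₁.trans ht₁₂)).1 ht₂_pos, ?_, ht₂_pos⟩⟩
  · refine ⟨min t₁ (t₂ - t₁), lt_min ht₁ (sub_pos.2 ht₁₂), fun t ht hne => ?_⟩
    have h₁ := min_le_left t₁ (t₂ - t₁)
    have h₂ := min_le_right t₁ (t₂ - t₁)
    rcases hne.lt_or_gt with h | h
    · exact hanti₁ ⟨by linarith [ht.1], h.le⟩ ⟨ht₁, le_rfl⟩ h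
    · exact hmono ⟨le_rfl, ht₁₂.le⟩ ⟨h.le, by linarith [ht.2]⟩ h
  · intro t ht hne
    rcases le_or_gt t t₁ with h | h
    · exact (hneg t ⟨ht, h⟩).trans ht₂_pos
    rcases hne.lt_or_gt with h' | h'
    · exact hmono ⟨h.le, h'.le⟩ ⟨ht₁₂.le, le_rfl⟩ h'
    · exact hanti₂ (mem_Ici.2 le_rfl) h'.le h'

noncomputable def rpowBump (k c d e C t : ℝ) : ℝ := k * t ^ d - c * t ^ (d + e) - C

section RpowBump

variable {k c d e C t : ℝ}

lemma rpowBump_eq (ht : 0 < t) : rpowBump k c d e C t = t ^ d * (k - c * t ^ e) - C := by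
  rw [rpowBump, rpow_add ht]; ring

lemma rpowBump_rpow_one_div {X : ℝ} (hX : 0 < X) (he : e ≠ 0) :
    rpowBump k c d e C (X ^ (1 / e)) = X ^ (d / e) * (k - c * X) - C := by
  rw [rpowBump_eq (rpow_pos_of_pos hX _), ← rpow_mul hX.le, ← rpow_mul hX.le,
    one_div_mul_cancel he, rpow_one, one_div_mul_eq_div]

lemma hasDerivAt_rpowBump (ht : 0 < t) :
    HasDerivAt (rpowBump k c d e C) (t ^ (d - 1) * (k * d - c * (d + e) * t ^ e)) t := by
  have h := (((hasDerivAt_rpow_const (p := d) (.inl ht.ne')).const_mul k).sub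
    ((hasDerivAt_rpow_const (p := d + e) (.inl ht.ne')).const_mul c)).sub_const C
  refine h.congr_deriv ?_
  rw [show d + e - 1 = d - 1 + e by ring, rpow_add ht]
  ring

lemma continuous_rpowBump (hd : 0 < d) (he : 0 < e) : Continuous (rpowBump k c d e C) := by
  unfold rpowBump
  fun_prop (disch := positivity)

variable {m : ℝ}

lemma strictMonoOn_rpowBump (hc : 0 < c) (hd : 0 < d) (he : 0 < e)
    (hm : c * (d + e) * m ^ e = k * d) : StrictMonoOn (rpowBump k c d e C) (Icc 0 m) := by
  refine strictMonoOn_of_deriv_pos (convex_Icc 0 m) (continuous_rpowBump hd he).continuousOn ?_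
  rw [interior_Icc]
  intro t ht
  rw [(hasDerivAt_rpowBump ht.1).deriv, ← hm]
  have : t ^ e < m ^ e := rpow_lt_rpow ht.1.le ht.2 he
  have : 0 < c * (d + e) := by positivity
  exact mul_pos (rpow_pos_of_pos ht.1 _) (by nlinarith)

lemma strictAntiOn_rpowBump (hc : 0 < c) (hd : 0 < d) (he : 0 < e) (hm₀ : 0 < m)
    (hm : c * (d + e) * m ^ e = k * d) : StrictAntiOn (rpowBump k c d e C) (Ici m) := by
  refine strictAntiOn_of_deriv_neg (convex_Ici m) (continuous_rpowBump hd he).continuousOn ?_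
  rw [interior_Ici]
  intro t ht
  have ht₀ : 0 < t := hm₀.trans ht
  rw [(hasDerivAt_rpowBump ht₀).deriv, ← hm]
  have : m ^ e < t ^ e := rpow_lt_rpow hm₀.le ht he
  have : 0 < c * (d + e) := by positivity
  exact mul_neg_of_pos_of_neg (rpow_pos_of_pos ht₀ _) (by nlinarith)

lemma exists_ge_rpowBump_neg (hc : 0 < c) (hC : 0 < C) (he : 0 < e) (hm : 0 < m) :
    ∃ T, m ≤ T ∧ rpowBump k c d e C T < 0 := by
  obtain ⟨T, hT⟩ : ∃ T, T = max m (|k / c| ^ (1 / e)) := ⟨_, rfl⟩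
  have hT₀ : 0 < T := hm.trans_le (hT ▸ le_max_left _ _)
  have hkT : k ≤ c * T ^ e := by
    calc k ≤ c * |k / c| := by
          rw [abs_div, abs_of_pos hc, mul_div_cancel₀ _ hc.ne']
          exact le_abs_self k
    _ = c * (|k / c| ^ (1 / e)) ^ e := by
      rw [← rpow_mul (abs_nonneg _), one_div_mul_cancel he.ne', rpow_one]
    _ ≤ c * T ^ e := by
      gcongr
      exact hT ▸ le_max_right _ _
  refine ⟨T, hT ▸ le_max_left _ _, ?_⟩
  rw [rpowBump_eq hT₀]
  nlinarith [rpow_pos_of_pos hT₀ d]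

lemma exists_posExactlyBetween_rpowBump (hk : 0 < k) (hc : 0 < c) (hC : 0 < C) (hd : 0 < d)
    (he : 0 < e) {x : ℝ} (hx₀ : 0 ≤ x) (hx : 0 < rpowBump k c d e C x) :
    ∃ r₀ r₁, PosExactlyBetween (rpowBump k c d e C) r₀ r₁ := by
  obtain ⟨m, hm_def⟩ : ∃ m, m = (k * d / (c * (d + e))) ^ (1 / e) := ⟨_, rfl⟩
  have hX : 0 < k * d / (c * (d + e)) := by positivity
  have hm₀ : 0 < m := hm_def ▸ rpow_pos_of_pos hX _
  have hm : c * (d + e) * m ^ e = k * d := by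
    rw [hm_def, ← rpow_mul hX.le, one_div_mul_cancel he.ne', rpow_one]
    field_simp
  have hmono := strictMonoOn_rpowBump (C := C) hc hd he hm
  have hanti := strictAntiOn_rpowBump (C := C) hc hd he hm₀ hm
  have hcont : Continuous (rpowBump k c d e C) := continuous_rpowBump hd he
  have hgm : 0 < rpowBump k c d e C m := by
    rcases le_total x m with h | h
    · exact hx.trans_le (hmono.monotoneOn ⟨hx₀, h⟩ ⟨hm₀.le, le_rfl⟩ h)
    · exact hx.trans_le (hanti.antitoneOn (mem_Ici.2 le_rfl) h h)
  have hg₀ : rpowBump k c d e C 0 < 0 := by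
    simp [rpowBump, zero_rpow hd.ne', zero_rpow (add_pos hd he).ne', hC]
  obtain ⟨T, hmT, hT⟩ := exists_ge_rpowBump_neg (k := k) (d := d) hc hC he hm₀
  obtain ⟨r₀, hr₀, hgr₀⟩ := intermediate_value_Ioo hm₀.le hcont.continuousOn ⟨hg₀, hgm⟩
  obtain ⟨r₁, hr₁, hgr₁⟩ := intermediate_value_Ioo' hmT hcont.continuousOn ⟨hT, hgm⟩
  refine ⟨r₀, r₁, hr₀.1, hr₀.2.trans hr₁.1, hgr₀, hgr₁, fun t ht h => ?_, fun t h₀ h₁ => ?_,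
    fun t h => ?_⟩
  · exact hgr₀ ▸ hmono ⟨ht.le, (h.trans hr₀.2).le⟩ ⟨hr₀.1.le, hr₀.2.le⟩ h
  · rcases le_total t m with h | h
    · exact hgr₀ ▸ hmono ⟨hr₀.1.le, hr₀.2.le⟩ ⟨(hr₀.1.trans h₀).le, h⟩ h₀
    · exact hgr₁ ▸ hanti h hr₁.1.le h₁
  · exact hgr₁ ▸ hanti hr₁.1.le (hr₁.1.le.trans h.le) h

end RpowBump

section Energy

variable {α β A B : ℝ} {h : ℝ → ℝ}

lemma energy_eq_rpow_mul_rpowBump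
    (hh : ∀ t : ℝ, 0 < t → h t = (1 / 2) * t ^ 2 - A * t ^ α - B * t ^ β) {t : ℝ} (ht : 0 < t) :
    h t = t ^ β * rpowBump (1 / 2) A (2 - β) (α - 2) B t := by
  have h₂ : t ^ β * t ^ (2 - β) = t ^ 2 := by rw [← rpow_add ht, add_sub_cancel, rpow_two]
  have hα : t ^ β * t ^ (2 - β + (α - 2)) = t ^ α := by rw [← rpow_add ht]; ring_nf
  rw [hh t ht, rpowBump, ← h₂, ← hα]
  ring

lemma hasDerivAt_energy
    (hh : ∀ t : ℝ, 0 < t → h t = (1 / 2) * t ^ 2 - A * t ^ α - B * t ^ β) {t : ℝ} (ht : 0 < t) :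
    HasDerivAt h (t ^ (β - 1) * rpowBump 1 (A * α) (2 - β) (α - 2) (B * β) t) t := by
  have hF := ((((hasDerivAt_pow 2 t).const_mul (1 / 2 : ℝ)).sub
    ((hasDerivAt_rpow_const (p := α) (.inl ht.ne')).const_mul A)).sub
    ((hasDerivAt_rpow_const (p := β) (.inl ht.ne')).const_mul B))
  have heq : h =ᶠ[nhds t] fun t => (1 / 2) * t ^ 2 - A * t ^ α - B * t ^ β :=
    Filter.eventually_of_mem (Ioi_mem_nhds ht) hh
  refine (hF.congr_of_eventuallyEq heq).congr_deriv ?_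
  have h₁ : t ^ (β - 1) * t ^ (2 - β) = t := by
    rw [← rpow_add ht, show β - 1 + (2 - β) = 1 by ring, rpow_one]
  have hα : t ^ (β - 1) * t ^ (2 - β + (α - 2)) = t ^ (α - 1) := by rw [← rpow_add ht]; ring_nf
  rw [rpowBump]
  linear_combination (-1 : ℝ) * h₁ + A * α * hα

theorem exists_posExactlyBetween_energy (hβ₀ : 0 < β) (hβ₂ : β < 2) (hα : 2 < α) (hA : 0 < A)
    (hB : 0 < B)
    (hcond : B < (α - 2) / (2 * (α - β)) * ((2 - β) / (2 * A * (α - β))) ^ ((2 - β) / (α - 2)))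
    (hh : ∀ t : ℝ, 0 < t → h t = (1 / 2) * t ^ 2 - A * t ^ α - B * t ^ β) :
    ∃ R₀ R₁ t₁ t₂, PosExactlyBetween h R₀ R₁ ∧ PosExactlyBetween (deriv h) t₁ t₂ := by
  have hd : 0 < 2 - β := sub_pos.2 hβ₂
  have he : 0 < α - 2 := sub_pos.2 hα
  have hαβ : 0 < α - β := by linarith
  have hderiv := fun t (ht : 0 < t) => hasDerivAt_energy hh ht
  obtain ⟨R₀, R₁, hΦ⟩ :
      ∃ R₀ R₁, PosExactlyBetween (rpowBump (1 / 2) A (2 - β) (α - 2) B) R₀ R₁ := by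
    have hX : 0 < (2 - β) / (2 * A * (α - β)) := by positivity
    refine exists_posExactlyBetween_rpowBump one_half_pos hA hB hd he
      (rpow_nonneg hX.le (1 / (α - 2))) ?_
    rw [rpowBump_rpow_one_div hX he.ne',
      show 1 / 2 - A * ((2 - β) / (2 * A * (α - β))) = (α - 2) / (2 * (α - β)) by
        field_simp [hαβ.ne']
        ring]
    linarith
  have hR := hΦ.of_eq_mul (fun t ht => rpow_pos_of_pos ht β)
    fun t ht => energy_eq_rpow_mul_rpowBump hh ht
  obtain ⟨c, hc₀, hc⟩ := hR.exists_deriv_pos fun t ht => (hderiv t ht).differentiableAt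
  rw [(hderiv c hc₀).deriv] at hc
  obtain ⟨t₁, t₂, hΨ⟩ := exists_posExactlyBetween_rpowBump one_pos (by positivity)
    (by positivity) hd he hc₀.le (pos_of_mul_pos_right hc (rpow_pos_of_pos hc₀ _).le)
  exact ⟨R₀, R₁, t₁, t₂, hR,
    hΨ.of_eq_mul (fun t ht => rpow_pos_of_pos ht _) fun t ht => (hderiv t ht).deriv⟩

end Energy

lemma condition_A1_scaled {N s p q a μ Cp Cq α β : ℝ} (hs : 0 < s)
    (hα : N * (p - 2) = 2 * s * α) (hβ : N * (q - 2) = 2 * s * β) (hβ₂ : β < 2) (hα₂ : 2 < α)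
    (ha : 0 < a) (hp : 0 < p) (hCp : 0 < Cp) (hq : 0 < q) (hCq : 0 < Cq)
    (hA1 : μ * a ^ (q - β + (p - α) * ((4 * s - N * (q - 2)) / (N * (p - 2) - 4 * s)))
      < (p * (4 * s - N * (q - 2)) / (2 * N * Cp * (p - q))) ^
          ((4 * s - N * (q - 2)) / (N * (p - 2) - 4 * s)) *
        ((N * (p - 2) - 4 * s) / (2 * N * (p - q))) * (q / Cq)) :
    μ * Cq / q * a ^ (q - β) <
      (α - 2) / (2 * (α - β)) * ((2 - β) / (2 * (Cp / p * a ^ (p - α)) * (α - β))) ^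
        ((2 - β) / (α - 2)) := by
  have hαβ : 0 < α - β := by linarith
  have hNpq : 2 * N * (p - q) = 2 * (2 * s * (α - β)) := by linear_combination 2 * (hα - hβ)
  have hr : (4 * s - N * (q - 2)) / (N * (p - 2) - 4 * s) = (2 - β) / (α - 2) := by
    rw [hα, hβ, div_eq_div_iff (by nlinarith) (by linarith)]; ring
  have hY : p * (4 * s - N * (q - 2)) / (2 * N * Cp * (p - q))
      = p * (2 - β) / (2 * Cp * (α - β)) := by
    rw [hβ, show 2 * N * Cp * (p - q) = Cp * (2 * N * (p - q)) by ring, hNpq,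
      div_eq_div_iff (by positivity) (by positivity)]
    ring
  have hK : (N * (p - 2) - 4 * s) / (2 * N * (p - q)) = (α - 2) / (2 * (α - β)) := by
    rw [hα, hNpq, div_eq_div_iff (by positivity) (by positivity)]; ring
  rw [hr, hY, hK, rpow_add ha, rpow_mul ha.le] at hA1
  have hA : (2 - β) / (2 * (Cp / p * a ^ (p - α)) * (α - β))
      = p * (2 - β) / (2 * Cp * (α - β)) / a ^ (p - α) := by
    field_simp
  rw [hA, div_rpow (by positivity) (by positivity), mul_div_assoc',
    lt_div_iff₀ (by positivity)]
  calc μ * Cq / q * a ^ (q - β) * (a ^ (p - α)) ^ ((2 - β) / (α - 2))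
      = μ * (a ^ (q - β) * (a ^ (p - α)) ^ ((2 - β) / (α - 2))) * (Cq / q) := by ring
    _ < (p * (2 - β) / (2 * Cp * (α - β))) ^ ((2 - β) / (α - 2)) * ((α - 2) / (2 * (α - β))) *
        (q / Cq) * (Cq / q) := mul_lt_mul_of_pos_right hA1 (by positivity)
    _ = (α - 2) / (2 * (α - β)) * (p * (2 - β) / (2 * Cp * (α - β))) ^ ((2 - β) / (α - 2)) := by
      field_simp

theorem stmt0_general
    (N : ℕ) (s1 : ℝ) (hs1 : 0 < s1)
    (hNs1 : 2 * s1 < (N : ℝ))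
    (p q : ℝ) (hq : 2 < q) (hq' : q < 2 + 4 * s1 / N)
    (hp : 2 + 4 * s1 / N < p)
    (a μ Cp Cq : ℝ) (ha : 0 < a) (hμ : 0 < μ) (hCp : 0 < Cp) (hCq : 0 < Cq)
    (hA1 : μ * a ^ (q - N * (q - 2) / (2 * s1) +
        (p - N * (p - 2) / (2 * s1)) * ((4 * s1 - N * (q - 2)) / (N * (p - 2) - 4 * s1)))
      < (p * (4 * s1 - N * (q - 2)) / (2 * N * Cp * (p - q))) ^
          ((4 * s1 - N * (q - 2)) / (N * (p - 2) - 4 * s1)) *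
        ((N * (p - 2) - 4 * s1) / (2 * N * (p - q))) * (q / Cq))
    (h : ℝ → ℝ)
    (hh : ∀ t : ℝ, 0 < t → h t = (1 / 2) * t ^ 2
        - (Cp / p) * a ^ (p - N * (p - 2) / (2 * s1)) * t ^ (N * (p - 2) / (2 * s1))
        - (μ * Cq / q) * a ^ (q - N * (q - 2) / (2 * s1)) * t ^ (N * (q - 2) / (2 * s1))) :
    ∃ R0 R1 t1 t2 : ℝ, 0 < R0 ∧ R0 < R1 ∧ h R0 = 0 ∧ h R1 = 0 ∧
      (∀ t : ℝ, 0 < t → (0 < h t ↔ t ∈ Set.Ioo R0 R1)) ∧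
      (deriv h t1 = 0 ∧ deriv h t2 = 0 ∧
        ∀ t : ℝ, 0 < t → deriv h t = 0 → t = t1 ∨ t = t2) ∧
      (t1 ∈ Set.Ioo 0 R0 ∧
        (∃ ε > 0, ∀ t ∈ Set.Ioo (t1 - ε) (t1 + ε), t ≠ t1 → h t1 < h t) ∧ h t1 < 0) ∧
      (t2 ∈ Set.Ioo R0 R1 ∧ (∀ t : ℝ, 0 < t → t ≠ t2 → h t < h t2) ∧ 0 < h t2) := by
  have hN : (0 : ℝ) < N := by linarith
  set α := (N : ℝ) * (p - 2) / (2 * s1) with hα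
  set β := (N : ℝ) * (q - 2) / (2 * s1) with hβ
  have hNα : (N : ℝ) * (p - 2) = 2 * s1 * α := by rw [hα]; field_simp
  have hNβ : (N : ℝ) * (q - 2) = 2 * s1 * β := by rw [hβ]; field_simp
  have hβ₀ : 0 < β := by positivity
  have hβ₂ : β < 2 := by nlinarith [(lt_div_iff₀ hN).1 (show q - 2 < 4 * s1 / N by linarith)]
  have hα₂ : 2 < α := by nlinarith [(div_lt_iff₀ hN).1 (show 4 * s1 / N < p - 2 by linarith)]
  have hp₀ : 0 < p := by linarith
  have hq₀ : 0 < q := by linarith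
  obtain ⟨R₀, R₁, t₁, t₂, hR, ht⟩ := exists_posExactlyBetween_energy hβ₀ hβ₂ hα₂
    (by positivity) (by positivity)
    (condition_A1_scaled hs1 hNα hNβ hβ₂ hα₂ ha hp₀ hCp hq₀ hCq hA1) hh
  exact exists_mountain_pass_geometry hR ht
    fun t ht => (hasDerivAt_energy hh ht).continuousAt.continuousWithinAt

theorem stmt0
    (N : ℕ) (hN : 2 ≤ N) (s1 : ℝ) (hs1 : 0 < s1) (hs1' : s1 < 1)
    (hNs1 : 2 * s1 < (N : ℝ))
    (p q : ℝ) (hq : 2 < q) (hq' : q < 2 + 4 * s1 / N)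
    (hp : 2 + 4 * s1 / N < p) (hp' : p < 2 * N / (N - 2 * s1))
    (a μ Cp Cq : ℝ) (ha : 0 < a) (hμ : 0 < μ) (hCp : 0 < Cp) (hCq : 0 < Cq)
    (hA1 : μ * a ^ (q - N * (q - 2) / (2 * s1) +
        (p - N * (p - 2) / (2 * s1)) * ((4 * s1 - N * (q - 2)) / (N * (p - 2) - 4 * s1)))
      < (p * (4 * s1 - N * (q - 2)) / (2 * N * Cp * (p - q))) ^
          ((4 * s1 - N * (q - 2)) / (N * (p - 2) - 4 * s1)) *
        ((N * (p - 2) - 4 * s1) / (2 * N * (p - q))) * (q / Cq))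
    (h : ℝ → ℝ)
    (hh : ∀ t : ℝ, 0 < t → h t = (1 / 2) * t ^ 2
        - (Cp / p) * a ^ (p - N * (p - 2) / (2 * s1)) * t ^ (N * (p - 2) / (2 * s1))
        - (μ * Cq / q) * a ^ (q - N * (q - 2) / (2 * s1)) * t ^ (N * (q - 2) / (2 * s1))) :
    ∃ R0 R1 t1 t2 : ℝ, 0 < R0 ∧ R0 < R1 ∧ h R0 = 0 ∧ h R1 = 0 ∧
      (∀ t : ℝ, 0 < t → (0 < h t ↔ t ∈ Set.Ioo R0 R1)) ∧
      (deriv h t1 = 0 ∧ deriv h t2 = 0 ∧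
        ∀ t : ℝ, 0 < t → deriv h t = 0 → t = t1 ∨ t = t2) ∧
      (t1 ∈ Set.Ioo 0 R0 ∧
        (∃ ε > 0, ∀ t ∈ Set.Ioo (t1 - ε) (t1 + ε), t ≠ t1 → h t1 < h t) ∧ h t1 < 0) ∧
      (t2 ∈ Set.Ioo R0 R1 ∧ (∀ t : ℝ, 0 < t → t ≠ t2 → h t < h t2) ∧ 0 < h t2) :=
  stmt0_general N s1 hs1 hNs1 p q hq hq' hp a μ Cp Cq ha hμ hCp hCq hA1 h hh
end

section
/- Let N ≥ 2 be an integer, 0 < s2 < s1 < 1 with N > 2·s1, and let p, q be reals with 2 < q < 2 + 4·s2/N and 2 + 4·s1/N < p < 2N/(N − 2·s1). Set κp = N(p−2)/(2p) and κq = N(q−2)/(2q). Let a, μ, Cp, Cq > 0 satisfy condition (A2): a^{(2q·s1 − N(q−2))/(4s1 − N(q−2)) + (2p·s1 − N(p−2))/(N(p−2) − 4s1)} · μ^{2s1/(4s1 − N(q−2))} < ( s1·(p·κp − 2s1) / (Cq·κq·(p·κp − q·κq)) )^{2s1/(4s1 − N(q−2))} · ( s1·(2s1 − q·κq) / (Cp·κp·(p·κp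 − q·κq)) )^{2s1/(N(p−2) − 4s1)}. Then there exist no real numbers X > 0, Y ≥ 0, P ≥ 0, Q ≥ 0 satisfying simultaneously: s1·(p·κp − 2s1)·X + s2·(p·κp − 2s2)·Y = μ·κq·(p·κp − q·κq)·Q; s1·(2s1 − q·κq)·X + s2·(2s2 − q·κq)·Y = κp·(p·κp − q·κq)·P; Q ≤ Cq · a^{q − N(q−2)/(2s1)} · X^{N(q−2)/(4s1)}; and P ≤ Cp · a^{p − N(p−2)/(2s1)} · X^{N(p−2)/(4s1)}. -/
/-!
The two Pohozaev-type identities bound `s₁(pκ_p − 2s₁) X` above by a multiple of `Q` and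
`s₁(2s₁ − qκ_q) X` above by a multiple of `P` (the `Y`-terms have the right sign since
`qκ_q < 2s₂ < 2s₁ < pκ_p`). Feeding in the Gagliardo–Nirenberg bounds `Q ≲ X^{qκ_q/(2s₁)}` and
`P ≲ X^{pκ_p/(2s₁)}`, where `qκ_q/(2s₁) < 1 < pκ_p/(2s₁)`, traps `X^{1/2}` between an explicit
lower and an explicit upper bound. These are compatible exactly when (A2) fails.
-/

open Real

namespace Real

theorem rpow_one_sub_le_div_of_mul_le_mul_rpow {X c d A : ℝ} (hX : 0 < X) (hc : 0 < c)
    (h : c * X ≤ d * X ^ A) : X ^ (1 - A) ≤ d / c := by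
  rw [rpow_sub hX, rpow_one, le_div_iff₀ hc, div_mul_eq_mul_div,
    div_le_iff₀ (rpow_pos_of_pos hX A)]
  linarith

theorem div_le_rpow_sub_one_of_mul_le_mul_rpow {X c d B : ℝ} (hX : 0 < X) (hd : 0 < d)
    (h : c * X ≤ d * X ^ B) : c / d ≤ X ^ (B - 1) := by
  rw [rpow_sub hX, rpow_one, div_le_iff₀ hd, div_mul_eq_mul_div, le_div_iff₀ hX]
  linarith

theorem rpow_div_le_rpow_div_of_mul_le_mul_rpow {X c₁ d₁ c₂ d₂ A B u v : ℝ} (hX : 0 < X)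
    (hc₁ : 0 < c₁) (hc₂ : 0 ≤ c₂) (hd₂ : 0 < d₂) (hu : 0 ≤ u) (hv : 0 ≤ v)
    (huv : (B - 1) * v = (1 - A) * u)
    (h₁ : c₁ * X ≤ d₁ * X ^ A) (h₂ : c₂ * X ≤ d₂ * X ^ B) : (c₂ / d₂) ^ v ≤ (d₁ / c₁) ^ u :=
  calc (c₂ / d₂) ^ v ≤ (X ^ (B - 1)) ^ v :=
        rpow_le_rpow (by positivity) (div_le_rpow_sub_one_of_mul_le_mul_rpow hX hd₂ h₂) hv
    _ = (X ^ (1 - A)) ^ u := by rw [← rpow_mul hX.le, ← rpow_mul hX.le, huv]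
    _ ≤ (d₁ / c₁) ^ u :=
        rpow_le_rpow (by positivity) (rpow_one_sub_le_div_of_mul_le_mul_rpow hX hc₁ h₁) hu

theorem rpow_div_rpow_le_rpow_div_iff {a μ R₁ R₂ θ₁ θ₂ u v : ℝ} (ha : 0 < a) (hμ : 0 ≤ μ)
    (hR₁ : 0 < R₁) (hR₂ : 0 ≤ R₂) :
    (R₂ / a ^ θ₂) ^ v ≤ (a ^ θ₁ * μ / R₁) ^ u ↔
      R₁ ^ u * R₂ ^ v ≤ a ^ (θ₁ * u + θ₂ * v) * μ ^ u := by
  rw [div_rpow (by positivity) hR₁.le, div_rpow hR₂ (by positivity), mul_rpow (by positivity) hμ,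
    div_le_div_iff₀ (by positivity) (by positivity), rpow_add ha, rpow_mul ha.le, rpow_mul ha.le]
  constructor <;> intro h <;> linarith

end Real

theorem mul_le_mul_mul_of_add_eq {c e k C X Y Q Z : ℝ} (he : 0 ≤ e) (hY : 0 ≤ Y) (hk : 0 ≤ k)
    (h : c * X + e * Y = k * Q) (hQ : Q ≤ C * Z) : c * X ≤ k * C * Z := by
  nlinarith [mul_le_mul_of_nonneg_left hQ hk, mul_nonneg he hY]

theorem stmt3_general
    (N : ℕ) (s1 s2 : ℝ) (hs2 : 0 < s2) (hs21 : s2 < s1)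
    (hNs1 : 2 * s1 < (N : ℝ))
    (p q : ℝ) (hq : 2 < q) (hq' : q < 2 + 4 * s2 / N)
    (hp : 2 + 4 * s1 / N < p)
    (κp κq : ℝ) (hκp : κp = N * (p - 2) / (2 * p)) (hκq : κq = N * (q - 2) / (2 * q))
    (a μ Cp Cq : ℝ) (ha : 0 < a) (hμ : 0 < μ) (hCp : 0 < Cp) (hCq : 0 < Cq)
    (hA2 : a ^ ((2 * q * s1 - N * (q - 2)) / (4 * s1 - N * (q - 2)) +
          (2 * p * s1 - N * (p - 2)) / (N * (p - 2) - 4 * s1)) *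
        μ ^ (2 * s1 / (4 * s1 - N * (q - 2)))
      < (s1 * (p * κp - 2 * s1) / (Cq * κq * (p * κp - q * κq))) ^
          (2 * s1 / (4 * s1 - N * (q - 2))) *
        (s1 * (2 * s1 - q * κq) / (Cp * κp * (p * κp - q * κq))) ^
          (2 * s1 / (N * (p - 2) - 4 * s1))) :
    ¬ ∃ X Y P Q : ℝ, 0 < X ∧ 0 ≤ Y ∧ 0 ≤ P ∧ 0 ≤ Q ∧
      s1 * (p * κp - 2 * s1) * X + s2 * (p * κp - 2 * s2) * Y
        = μ * κq * (p * κp - q * κq) * Q ∧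
      s1 * (2 * s1 - q * κq) * X + s2 * (2 * s2 - q * κq) * Y
        = κp * (p * κp - q * κq) * P ∧
      Q ≤ Cq * a ^ (q - N * (q - 2) / (2 * s1)) * X ^ (N * (q - 2) / (4 * s1)) ∧
      P ≤ Cp * a ^ (p - N * (p - 2) / (2 * s1)) * X ^ (N * (p - 2) / (4 * s1)) := by
  rintro ⟨X, Y, P, Q, hX, hY, -, -, e1, e2, iQ, iP⟩
  have hs1 : 0 < s1 := hs2.trans hs21
  have hN : (0 : ℝ) < N := by linarith
  have hqN : N * (q - 2) < 4 * s2 := (lt_div_iff₀' hN).1 (sub_lt_iff_lt_add'.2 hq')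
  have hpN : 4 * s1 < N * (p - 2) := (div_lt_iff₀' hN).1 (lt_sub_iff_add_lt'.2 hp)
  have hq2 : 0 < q - 2 := by linarith
  have hp2 : 0 < p - 2 := by nlinarith
  have hp0 : 0 < p := by linarith
  have hqκ : q * κq = N * (q - 2) / 2 := by rw [hκq]; field_simp
  have hpκ : p * κp = N * (p - 2) / 2 := by rw [hκp]; field_simp [hp0.ne']
  have hκq : 0 < κq := by rw [hκq]; positivity
  have hκp : 0 < κp := by rw [hκp]; positivity
  have hq_gap : 0 < 2 * s1 - q * κq := by linarith
  have hp_gap : 0 < p * κp - 2 * s1 := by linarith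
  have hpq_gap : 0 < p * κp - q * κq := by linarith
  have hdq : 0 < 4 * s1 - N * (q - 2) := by linarith
  have hdp : 0 < N * (p - 2) - 4 * s1 := by linarith
  have hQX := mul_le_mul_mul_of_add_eq (by nlinarith) hY (by positivity) e1 iQ
  have hPX := mul_le_mul_mul_of_add_eq (by nlinarith) hY (by positivity) e2 iP
  have htrap := rpow_div_le_rpow_div_of_mul_le_mul_rpow (u := 2 * s1 / (4 * s1 - N * (q - 2)))
    (v := 2 * s1 / (N * (p - 2) - 4 * s1)) hX (by positivity) (by positivity) (by positivity)
    (by positivity) (by positivity) (by field_simp) hQX hPX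
  have hexp : (2 * q * s1 - N * (q - 2)) / (4 * s1 - N * (q - 2)) +
      (2 * p * s1 - N * (p - 2)) / (N * (p - 2) - 4 * s1) =
      (q - N * (q - 2) / (2 * s1)) * (2 * s1 / (4 * s1 - N * (q - 2))) +
      (p - N * (p - 2) / (2 * s1)) * (2 * s1 / (N * (p - 2) - 4 * s1)) := by
    field_simp
  rw [hexp] at hA2
  refine hA2.not_ge ((rpow_div_rpow_le_rpow_div_iff ha hμ.le (by positivity) (by positivity)).1 ?_)
  convert htrap using 2 <;> field_simp

theorem stmt3
    (N : ℕ) (hN : 2 ≤ N) (s1 s2 : ℝ) (hs2 : 0 < s2) (hs21 : s2 < s1) (hs1 : s1 < 1)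
    (hNs1 : 2 * s1 < (N : ℝ))
    (p q : ℝ) (hq : 2 < q) (hq' : q < 2 + 4 * s2 / N)
    (hp : 2 + 4 * s1 / N < p) (hp' : p < 2 * N / (N - 2 * s1))
    (κp κq : ℝ) (hκp : κp = N * (p - 2) / (2 * p)) (hκq : κq = N * (q - 2) / (2 * q))
    (a μ Cp Cq : ℝ) (ha : 0 < a) (hμ : 0 < μ) (hCp : 0 < Cp) (hCq : 0 < Cq)
    (hA2 : a ^ ((2 * q * s1 - N * (q - 2)) / (4 * s1 - N * (q - 2)) +
          (2 * p * s1 - N * (p - 2)) / (N * (p - 2) - 4 * s1)) *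
        μ ^ (2 * s1 / (4 * s1 - N * (q - 2)))
      < (s1 * (p * κp - 2 * s1) / (Cq * κq * (p * κp - q * κq))) ^
          (2 * s1 / (4 * s1 - N * (q - 2))) *
        (s1 * (2 * s1 - q * κq) / (Cp * κp * (p * κp - q * κq))) ^
          (2 * s1 / (N * (p - 2) - 4 * s1))) :
    ¬ ∃ X Y P Q : ℝ, 0 < X ∧ 0 ≤ Y ∧ 0 ≤ P ∧ 0 ≤ Q ∧
      s1 * (p * κp - 2 * s1) * X + s2 * (p * κp - 2 * s2) * Y
        = μ * κq * (p * κp - q * κq) * Q ∧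
      s1 * (2 * s1 - q * κq) * X + s2 * (2 * s2 - q * κq) * Y
        = κp * (p * κp - q * κq) * P ∧
      Q ≤ Cq * a ^ (q - N * (q - 2) / (2 * s1)) * X ^ (N * (q - 2) / (4 * s1)) ∧
      P ≤ Cp * a ^ (p - N * (p - 2) / (2 * s1)) * X ^ (N * (p - 2) / (4 * s1)) :=
  stmt3_general N s1 s2 hs2 hs21 hNs1 p q hq hq' hp κp κq hκp hκq a μ Cp Cq ha hμ hCp hCq hA2
end

section
/- Let A, B, C, D > 0 and let d, b, a, c be real numbers with 0 < d < b < a < c. Define f : ℝ → ℝ by f(t) = A·e^{a t} + B·e^{b t} − C·e^{c t} − D·e^{d t}, and suppose there exists t₀ ∈ ℝ with f(t₀) > 0. Then: (i) f has exactly two critical points ξ < τ; (ii) ξ is a strict local minimum point of f with f(ξ) < 0, and τ is the strict global maximum point of f with f(τ) = max_{t∈ℝ} f(t) > 0; (iii) f has exactly two zeros c₀ < d₀, and they interlace as ξ < c₀ < τ < d₀; (iv) f is strictly decreasing and concave on (τ, ∞) (in particular f'(t) < 0 and f''(t) ≤ 0 for t > τ). -/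
/-!
Write `f' = e^{dt} P` and `P' = e^{(c-d)t} Q`. The function
`Q t = (a-d)aA e^{(a-c)t} + (b-d)bB e^{(b-c)t} - (c-d)cC` is strictly decreasing, so by Rolle
`P` increases and then decreases between any two of its zeros. Since `P → -dD < 0` at `-∞`,
`P → -∞` at `+∞`, and `P` must be positive somewhere (otherwise `f` would decrease from its
negative values near `-∞`), `P` is negative, positive, negative with two zeros `ξ < τ`. Hence `f`
decreases, increases, decreases; as `f < 0` near both ends and `f t₀ > 0`, this yields the zeros
and extrema. On `(τ, ∞)`, `f' = e^{dt} P` is a product of a positive increasing and a negative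
decreasing factor, hence decreasing, which gives concavity.
-/

open Real Set Filter Topology

noncomputable def expComb (A B C D a b c d t : ℝ) : ℝ :=
  A * exp (a * t) + B * exp (b * t) - C * exp (c * t) - D * exp (d * t)

section expComb

variable {A B C D a b c d : ℝ}

theorem continuous_expComb : Continuous (expComb A B C D a b c d) := by
  unfold expComb
  fun_prop

theorem hasDerivAt_expComb (t : ℝ) :
    HasDerivAt (expComb A B C D a b c d) (expComb (a * A) (b * B) (c * C) (d * D) a b c d t) t := by
  have h : ∀ E e : ℝ, HasDerivAt (fun t => E * exp (e * t)) (e * E * exp (e * t)) t := fun E e =>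
    (((hasDerivAt_id t).const_mul e).exp.const_mul E).congr_deriv (by simp only [id, mul_one]; ring)
  exact (((h A a).add (h B b)).sub (h C c)).sub (h D d)

theorem expComb_eq_exp_mul (e t : ℝ) :
    expComb A B C D a b c d t =
      exp (e * t) * expComb A B C D (a - e) (b - e) (c - e) (d - e) t := by
  have h : ∀ x, exp (x * t) = exp (e * t) * exp ((x - e) * t) := fun x => by
    rw [← exp_add]; ring_nf
  simp only [expComb, h a, h b, h c, h d]
  ring

theorem hasDerivAt_expComb_eq_exp_mul (e t : ℝ) :
    HasDerivAt (expComb A B C D a b c d)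
      (exp (e * t) * expComb (a * A) (b * B) (c * C) (d * D) (a - e) (b - e) (c - e) (d - e) t) t :=
  expComb_eq_exp_mul (A := a * A) e t ▸ hasDerivAt_expComb t

theorem strictAnti_expComb (hA : A * a < 0) (hB : B * b ≤ 0) (hC : 0 ≤ C * c) (hD : 0 ≤ D * d) :
    StrictAnti (expComb A B C D a b c d) := by
  refine strictAnti_of_hasDerivAt_neg hasDerivAt_expComb fun t => ?_
  have hA' : a * A * exp (a * t) < 0 := mul_neg_of_neg_of_pos (by linarith) (exp_pos _)
  have hB' : b * B * exp (b * t) ≤ 0 := mul_nonpos_of_nonpos_of_nonneg (by linarith) (exp_pos _).le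
  have hC' : 0 ≤ c * C * exp (c * t) := mul_nonneg (by linarith) (exp_pos _).le
  have hD' : 0 ≤ d * D * exp (d * t) := mul_nonneg (by linarith) (exp_pos _).le
  simp only [expComb]
  linarith

theorem tendsto_exp_mul_atTop_of_neg (ha : a < 0) :
    Tendsto (fun t => exp (a * t)) atTop (𝓝 0) :=
  tendsto_exp_atBot.comp (tendsto_id.const_mul_atTop_of_neg ha)

theorem tendsto_exp_mul_atBot_of_pos (ha : 0 < a) :
    Tendsto (fun t => exp (a * t)) atBot (𝓝 0) :=
  tendsto_exp_atBot.comp (tendsto_id.const_mul_atBot ha)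

theorem tendsto_expComb_atTop (ha : a < 0) (hb : b < 0) (hd : d < 0) :
    Tendsto (expComb A B C D a b 0 d) atTop (𝓝 (-C)) := by
  have h := ((((tendsto_exp_mul_atTop_of_neg ha).const_mul A).add
    ((tendsto_exp_mul_atTop_of_neg hb).const_mul B)).sub_const C).sub
    ((tendsto_exp_mul_atTop_of_neg hd).const_mul D)
  rw [show -C = A * 0 + B * 0 - C - D * 0 by ring]
  exact h.congr fun t => by simp [expComb]

theorem tendsto_expComb_atBot (ha : 0 < a) (hb : 0 < b) (hc : 0 < c) :
    Tendsto (expComb A B C D a b c 0) atBot (𝓝 (-D)) := by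
  have h := ((((tendsto_exp_mul_atBot_of_pos ha).const_mul A).add
    ((tendsto_exp_mul_atBot_of_pos hb).const_mul B)).sub
    ((tendsto_exp_mul_atBot_of_pos hc).const_mul C)).sub_const D
  rw [show -D = A * 0 + B * 0 - C * 0 - D by ring]
  exact h.congr fun t => by simp [expComb]

theorem eventually_expComb_neg_atTop (hC : 0 < C) (ha : a < c) (hb : b < c) (hd : d < c) :
    ∀ᶠ t in atTop, expComb A B C D a b c d t < 0 := by
  have h := (tendsto_expComb_atTop (A := A) (B := B) (C := C) (D := D) (sub_neg.2 ha)
    (sub_neg.2 hb) (sub_neg.2 hd)).eventually (gt_mem_nhds (neg_neg_of_pos hC))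
  filter_upwards [h] with t ht
  rw [expComb_eq_exp_mul c, sub_self]
  exact mul_neg_of_pos_of_neg (exp_pos _) ht

theorem eventually_expComb_neg_atBot (hD : 0 < D) (ha : d < a) (hb : d < b) (hc : d < c) :
    ∀ᶠ t in atBot, expComb A B C D a b c d t < 0 := by
  have h := (tendsto_expComb_atBot (A := A) (B := B) (C := C) (D := D) (sub_pos.2 ha)
    (sub_pos.2 hb) (sub_pos.2 hc)).eventually (gt_mem_nhds (neg_neg_of_pos hD))
  filter_upwards [h] with t ht
  rw [expComb_eq_exp_mul d, sub_self]
  exact mul_neg_of_pos_of_neg (exp_pos _) ht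

-- The exponent `d - d` is left unsimplified so that `expComb_eq_exp_mul` applies verbatim.
noncomputable def expCombSlope (A B C D a b c d : ℝ) : ℝ → ℝ :=
  expComb (a * A) (b * B) (c * C) (d * D) (a - d) (b - d) (c - d) (d - d)

theorem hasDerivAt_expComb_eq_exp_mul_slope (t : ℝ) :
    HasDerivAt (expComb A B C D a b c d) (exp (d * t) * expCombSlope A B C D a b c d t) t :=
  hasDerivAt_expComb_eq_exp_mul d t

end expComb

def SignNegPosNeg (g : ℝ → ℝ) (x y : ℝ) : Prop :=
  (∀ t < x, g t < 0) ∧ (∀ t ∈ Ioo x y, 0 < g t) ∧ ∀ t, y < t → g t < 0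

section Shape

variable {g w p : ℝ → ℝ} {x y ξ τ : ℝ}

theorem SignNegPosNeg.eq_or_eq_of_eq_zero (h : SignNegPosNeg g x y) {t : ℝ} (ht : g t = 0) :
    t = x ∨ t = y := by
  obtain ⟨h₁, h₂, h₃⟩ := h
  rcases lt_trichotomy t x with htx | rfl | hxt
  · exact absurd ht (h₁ t htx).ne
  · exact Or.inl rfl
  rcases lt_trichotomy t y with hty | rfl | hyt
  · exact absurd ht (h₂ t ⟨hxt, hty⟩).ne'
  · exact Or.inr rfl
  · exact absurd ht (h₃ t hyt).ne

theorem signNegPosNeg_of_strictMonoOn_Iic_strictAntiOn_Ici {s : ℝ}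
    (hmono : StrictMonoOn g (Iic s)) (hanti : StrictAntiOn g (Ici s))
    (hxs : x < s) (hsy : s < y) (hx : g x = 0) (hy : g y = 0) : SignNegPosNeg g x y := by
  refine ⟨fun t ht => hx ▸ hmono (ht.trans hxs).le hxs.le ht, fun t ht => ?_,
    fun t ht => hy ▸ hanti hsy.le (hsy.trans ht).le ht⟩
  rcases le_total t s with hts | hst
  · exact hx ▸ hmono hxs.le hts ht.1
  · exact hy ▸ hanti hst hsy.le ht.2

/-- Rolle gives a zero of `p` between `x` and `y`, and a strictly antitone `p` changes sign
only there. -/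
theorem exists_strictMonoOn_Iic_strictAntiOn_Ici (hg : ∀ t, HasDerivAt g (w t * p t) t)
    (hw : ∀ t, 0 < w t) (hp : StrictAnti p) (hxy : x < y) (hgxy : g x = g y) :
    ∃ s ∈ Ioo x y, StrictMonoOn g (Iic s) ∧ StrictAntiOn g (Ici s) := by
  have hcont : Continuous g := continuous_iff_continuousAt.2 fun t => (hg t).continuousAt
  obtain ⟨s, hs, hs0⟩ := exists_hasDerivAt_eq_zero hxy hcont.continuousOn hgxy fun t _ => hg t
  have hps : p s = 0 := (mul_eq_zero.1 hs0).resolve_left (hw s).ne'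
  refine ⟨s, hs, strictMonoOn_of_hasDerivWithinAt_pos (convex_Iic s)
    hcont.continuousOn (fun t _ => (hg t).hasDerivWithinAt) fun t ht => ?_,
    strictAntiOn_of_hasDerivWithinAt_neg (convex_Ici s)
    hcont.continuousOn (fun t _ => (hg t).hasDerivWithinAt) fun t ht => ?_⟩
  · rw [interior_Iic] at ht
    exact mul_pos (hw t) (hps ▸ hp ht)
  · rw [interior_Ici] at ht
    exact mul_neg_of_pos_of_neg (hw t) (hps ▸ hp ht)

theorem exists_pos_of_hasDerivAt_mul (hg : ∀ t, HasDerivAt g (w t * p t) t)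
    (hw : ∀ t, 0 ≤ w t) (hbot : ∀ᶠ t in atBot, g t < 0) {t₀ : ℝ} (ht₀ : 0 < g t₀) :
    ∃ t, 0 < p t := by
  by_contra! h
  have hanti : Antitone g :=
    antitone_of_hasDerivAt_nonpos hg fun t => mul_nonpos_of_nonneg_of_nonpos (hw t) (h t)
  obtain ⟨u, hu, hut⟩ := (hbot.and (eventually_le_atBot t₀)).exists
  linarith [hanti hut]

theorem exists_zeros_of_eventually_neg (hp : Continuous p) (hbot : ∀ᶠ t in atBot, p t < 0)
    (htop : ∀ᶠ t in atTop, p t < 0) {t₁ : ℝ} (ht₁ : 0 < p t₁) :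
    ∃ x y, x < y ∧ p x = 0 ∧ p y = 0 := by
  obtain ⟨u, hu, hut⟩ := (hbot.and (eventually_le_atBot t₁)).exists
  obtain ⟨v, hv, htv⟩ := (htop.and (eventually_ge_atTop t₁)).exists
  obtain ⟨x, hx, hx0⟩ := intermediate_value_Ioo hut hp.continuousOn ⟨hu, ht₁⟩
  obtain ⟨y, hy, hy0⟩ := intermediate_value_Ioo' htv hp.continuousOn ⟨hv, ht₁⟩
  exact ⟨x, y, hx.2.trans hy.1, hx0, hy0⟩

theorem strictAntiOn_Iic_strictMonoOn_Icc_strictAntiOn_Ici_of_signNegPosNeg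
    (hg : ∀ t, HasDerivAt g (w t * p t) t)
    (hw : ∀ t, 0 < w t) (hp : SignNegPosNeg p ξ τ) :
    StrictAntiOn g (Iic ξ) ∧ StrictMonoOn g (Icc ξ τ) ∧ StrictAntiOn g (Ici τ) := by
  have hcont : Continuous g := continuous_iff_continuousAt.2 fun t => (hg t).continuousAt
  have hg' : ∀ s, ∀ t ∈ interior s, HasDerivWithinAt g (w t * p t) (interior s) t :=
    fun _ t _ => (hg t).hasDerivWithinAt
  refine ⟨strictAntiOn_of_hasDerivWithinAt_neg (convex_Iic ξ) hcont.continuousOn (hg' _)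
      fun t ht => ?_,
    strictMonoOn_of_hasDerivWithinAt_pos (convex_Icc ξ τ) hcont.continuousOn (hg' _)
      fun t ht => ?_,
    strictAntiOn_of_hasDerivWithinAt_neg (convex_Ici τ) hcont.continuousOn (hg' _)
      fun t ht => ?_⟩
  · rw [interior_Iic] at ht
    exact mul_neg_of_pos_of_neg (hw t) (hp.1 t ht)
  · rw [interior_Icc] at ht
    exact mul_pos (hw t) (hp.2.1 t ht)
  · rw [interior_Ici] at ht
    exact mul_neg_of_pos_of_neg (hw t) (hp.2.2 t ht)

theorem neg_of_strictAntiOn_Iic (h : StrictAntiOn g (Iic ξ)) (hbot : ∀ᶠ t in atBot, g t < 0)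
    {t : ℝ} (ht : t ≤ ξ) : g t < 0 := by
  obtain ⟨u, hu, hut⟩ := (hbot.and (eventually_lt_atBot t)).exists
  exact (h (hut.le.trans ht) ht hut).trans hu

theorem pos_and_lt_of_strictMonoOn_Icc_strictAntiOn_Ici (hmono : StrictMonoOn g (Icc ξ τ))
    (hanti : StrictAntiOn g (Ici τ)) (hξτ : ξ ≤ τ) (hneg : ∀ t ≤ ξ, g t < 0) {t₀ : ℝ}
    (ht₀ : 0 < g t₀) :
    0 < g τ ∧ ∀ t, t ≠ τ → g t < g τ := by
  have hright : ∀ t, ξ < t → t ≠ τ → g t < g τ := fun t hξt htτ => by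
    rcases htτ.lt_or_gt with htτ | hτt
    · exact hmono ⟨hξt.le, htτ.le⟩ ⟨hξτ, le_rfl⟩ htτ
    · exact hanti self_mem_Ici hτt.le hτt
  have hξt₀ : ξ < t₀ := lt_of_not_ge fun h => (hneg t₀ h).not_gt ht₀
  have hτ : 0 < g τ := by
    rcases eq_or_ne t₀ τ with rfl | ht₀τ
    · exact ht₀
    · exact ht₀.trans (hright t₀ hξt₀ ht₀τ)
  refine ⟨hτ, fun t htτ => ?_⟩
  rcases le_or_gt t ξ with htξ | hξt
  · exact (hneg t htξ).trans hτ
  · exact hright t hξt htτ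

theorem exists_signNegPosNeg_of_strictMonoOn_Icc_strictAntiOn_Ici (hcont : Continuous g)
    (hmono : StrictMonoOn g (Icc ξ τ)) (hanti : StrictAntiOn g (Ici τ)) (hξτ : ξ ≤ τ)
    (hneg : ∀ t ≤ ξ, g t < 0) (hτ : 0 < g τ) (htop : ∀ᶠ t in atTop, g t < 0) :
    ∃ c₀ d₀, ξ < c₀ ∧ c₀ < τ ∧ τ < d₀ ∧ g c₀ = 0 ∧ g d₀ = 0 ∧ SignNegPosNeg g c₀ d₀ := by
  obtain ⟨c₀, ⟨hξc₀, hc₀τ⟩, hc₀⟩ :=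
    intermediate_value_Ioo hξτ hcont.continuousOn ⟨hneg ξ le_rfl, hτ⟩
  obtain ⟨v, hv, hτv⟩ := (htop.and (eventually_ge_atTop τ)).exists
  obtain ⟨d₀, ⟨hτd₀, -⟩, hd₀⟩ := intermediate_value_Ioo' hτv hcont.continuousOn ⟨hv, hτ⟩
  refine ⟨c₀, d₀, hξc₀, hc₀τ, hτd₀, hc₀, hd₀, fun t ht => ?_, fun t ht => ?_, fun t ht => ?_⟩
  · rcases le_or_gt t ξ with htξ | hξt
    · exact hneg t htξ
    · exact hc₀ ▸ hmono ⟨hξt.le, (ht.trans hc₀τ).le⟩ ⟨hξc₀.le, hc₀τ.le⟩ ht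
  · rcases le_or_gt t τ with htτ | hτt
    · exact hc₀ ▸ hmono ⟨hξc₀.le, hc₀τ.le⟩ ⟨(hξc₀.trans ht.1).le, htτ⟩ ht.1
    · exact hd₀ ▸ hanti hτt.le hτd₀.le ht.2
  · exact hd₀ ▸ hanti hτd₀.le (hτd₀.trans ht).le ht

theorem exists_strictLocalMin_of_strictAntiOn_Iic_strictMonoOn_Icc
    (hanti : StrictAntiOn g (Iic ξ)) (hmono : StrictMonoOn g (Icc ξ τ)) (hξτ : ξ < τ) :
    ∃ ε > 0, ∀ t ∈ Ioo (ξ - ε) (ξ + ε), t ≠ ξ → g ξ < g t := by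
  refine ⟨τ - ξ, sub_pos.2 hξτ, fun t ht htξ => ?_⟩
  rcases htξ.lt_or_gt with htξ | hξt
  · exact hanti htξ.le self_mem_Iic htξ
  · exact hmono ⟨le_rfl, hξτ.le⟩ ⟨hξt.le, by linarith [ht.2]⟩ hξt

theorem strictAntiOn_exp_mul {s : Set ℝ} {d : ℝ} (hd : 0 ≤ d) (hp : StrictAntiOn p s)
    (hp0 : ∀ t ∈ s, p t ≤ 0) : StrictAntiOn (fun t => exp (d * t) * p t) s := by
  intro u hu v hv huv
  calc exp (d * v) * p v ≤ exp (d * u) * p v :=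
        mul_le_mul_of_nonpos_right (exp_le_exp.2 (by nlinarith)) (hp0 v hv)
    _ < exp (d * u) * p u := mul_lt_mul_of_pos_left (hp hu hv huv) (exp_pos _)

end Shape

theorem exists_signNegPosNeg_expCombSlope {A B C D a b c d : ℝ}
    (hA : 0 < A) (hB : 0 < B) (hC : 0 < C) (hD : 0 < D)
    (hd : 0 < d) (hdb : d < b) (hba : b < a) (hac : a < c) {t₀ : ℝ}
    (ht₀ : 0 < expComb A B C D a b c d t₀) :
    ∃ ξ τ, ξ < τ ∧ expCombSlope A B C D a b c d ξ = 0 ∧ expCombSlope A B C D a b c d τ = 0 ∧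
      SignNegPosNeg (expCombSlope A B C D a b c d) ξ τ ∧
      StrictAntiOn (expCombSlope A B C D a b c d) (Ici τ) := by
  have hb : 0 < b := hd.trans hdb
  have ha : 0 < a := hb.trans hba
  have hc : 0 < c := ha.trans hac
  obtain ⟨t₁, ht₁⟩ := exists_pos_of_hasDerivAt_mul hasDerivAt_expComb_eq_exp_mul_slope
    (fun _ => (exp_pos _).le) (eventually_expComb_neg_atBot hD (by linarith) (by linarith)
      (by linarith)) ht₀
  obtain ⟨ξ, τ, hξτ, hξ, hτ⟩ := exists_zeros_of_eventually_neg continuous_expComb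
    (eventually_expComb_neg_atBot (mul_pos hd hD) (by linarith) (by linarith) (by linarith))
    (eventually_expComb_neg_atTop (mul_pos hc hC) (by linarith) (by linarith) (by linarith)) ht₁
  have hQ : StrictAnti (expComb ((a - d) * (a * A)) ((b - d) * (b * B)) ((c - d) * (c * C))
      ((d - d) * (d * D)) (a - d - (c - d)) (b - d - (c - d)) (c - d - (c - d))
      (d - d - (c - d))) :=
    strictAnti_expComb (mul_neg_of_pos_of_neg (by positivity [sub_pos.2 (hdb.trans hba)])
      (by linarith)) (mul_neg_of_pos_of_neg (by positivity [sub_pos.2 hdb]) (by linarith)).le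
      (by rw [sub_self, mul_zero]) (by rw [sub_self, zero_mul, zero_mul])
  obtain ⟨s, hs, hmono, hanti⟩ := exists_strictMonoOn_Iic_strictAntiOn_Ici
    (hasDerivAt_expComb_eq_exp_mul (c - d)) (fun _ => exp_pos _) hQ hξτ (hξ.trans hτ.symm)
  exact ⟨ξ, τ, hξτ, hξ, hτ,
    signNegPosNeg_of_strictMonoOn_Iic_strictAntiOn_Ici hmono hanti hs.1 hs.2 hξ hτ,
    hanti.mono (Ici_subset_Ici.2 hs.2.le)⟩

theorem stmt6
    (A B C D : ℝ) (hA : 0 < A) (hB : 0 < B) (hC : 0 < C) (hD : 0 < D)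
    (d b a c : ℝ) (hd : 0 < d) (hdb : d < b) (hba : b < a) (hac : a < c)
    (f : ℝ → ℝ)
    (hf : ∀ t : ℝ, f t = A * Real.exp (a * t) + B * Real.exp (b * t)
        - C * Real.exp (c * t) - D * Real.exp (d * t))
    (t₀ : ℝ) (ht₀ : 0 < f t₀) :
    ∃ ξ τ c₀ d₀ : ℝ, ξ < τ ∧
      -- (i) exactly two critical points
      deriv f ξ = 0 ∧ deriv f τ = 0 ∧ (∀ t : ℝ, deriv f t = 0 → t = ξ ∨ t = τ) ∧
      -- (ii) ξ strict local min with f ξ < 0, τ strict global max with f τ > 0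
      (∃ ε > 0, ∀ t ∈ Set.Ioo (ξ - ε) (ξ + ε), t ≠ ξ → f ξ < f t) ∧ f ξ < 0 ∧
      (∀ t : ℝ, t ≠ τ → f t < f τ) ∧ 0 < f τ ∧
      -- (iii) exactly two zeros, interlacing
      c₀ < d₀ ∧ f c₀ = 0 ∧ f d₀ = 0 ∧ (∀ t : ℝ, f t = 0 → t = c₀ ∨ t = d₀) ∧
      ξ < c₀ ∧ c₀ < τ ∧ τ < d₀ ∧
      -- (iv) strictly decreasing and concave on (τ, ∞)
      StrictAntiOn f (Set.Ioi τ) ∧ ConcaveOn ℝ (Set.Ioi τ) f ∧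
      (∀ t : ℝ, τ < t → deriv f t < 0 ∧ deriv (deriv f) t ≤ 0) := by
  obtain rfl : f = expComb A B C D a b c d := funext hf
  obtain ⟨ξ, τ, hξτ, hPξ, hPτ, hP, hPanti⟩ :=
    exists_signNegPosNeg_expCombSlope hA hB hC hD hd hdb hba hac ht₀
  have hderiv : deriv (expComb A B C D a b c d) =
      fun t => exp (d * t) * expCombSlope A B C D a b c d t :=
    funext fun t => (hasDerivAt_expComb_eq_exp_mul_slope t).deriv
  obtain ⟨hanti₁, hmono, hanti₂⟩ :=
    strictAntiOn_Iic_strictMonoOn_Icc_strictAntiOn_Ici_of_signNegPosNeg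
      hasDerivAt_expComb_eq_exp_mul_slope (fun _ => exp_pos _) hP
  have hneg : ∀ t ≤ ξ, expComb A B C D a b c d t < 0 := fun t => neg_of_strictAntiOn_Iic hanti₁
    (eventually_expComb_neg_atBot hD (by linarith) (by linarith) (by linarith))
  obtain ⟨hτ, hmax⟩ :=
    pos_and_lt_of_strictMonoOn_Icc_strictAntiOn_Ici hmono hanti₂ hξτ.le hneg ht₀
  obtain ⟨c₀, d₀, hξc₀, hc₀τ, hτd₀, hc₀, hd₀, hzeros⟩ :=
    exists_signNegPosNeg_of_strictMonoOn_Icc_strictAntiOn_Ici continuous_expComb hmono hanti₂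
      hξτ.le hneg hτ (eventually_expComb_neg_atTop hC (by linarith) (by linarith) (by linarith))
  have hderiv_anti : StrictAntiOn (deriv (expComb A B C D a b c d)) (Ioi τ) :=
    hderiv ▸ strictAntiOn_exp_mul hd.le (hPanti.mono Ioi_subset_Ici_self) fun t ht =>
      (hP.2.2 t ht).le
  refine ⟨ξ, τ, c₀, d₀, hξτ, by simp [hderiv, hPξ], by simp [hderiv, hPτ],
    fun t ht => hP.eq_or_eq_of_eq_zero ?_,
    exists_strictLocalMin_of_strictAntiOn_Iic_strictMonoOn_Icc hanti₁ hmono hξτ, hneg ξ le_rfl,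
    hmax, hτ, hc₀τ.trans hτd₀, hc₀, hd₀, fun t => hzeros.eq_or_eq_of_eq_zero, hξc₀, hc₀τ, hτd₀,
    hanti₂.mono Ioi_subset_Ici_self, (StrictAntiOn.strictConcaveOn_of_deriv (convex_Ioi τ)
      continuous_expComb.continuousOn (by rwa [interior_Ioi])).concaveOn, fun t ht => ⟨?_, ?_⟩⟩
  · rw [hderiv] at ht
    exact (mul_eq_zero.1 ht).resolve_left (exp_pos _).ne'
  · rw [hderiv]
    exact mul_neg_of_pos_of_neg (exp_pos _) (hP.2.2 t ht)
  · rw [← derivWithin_of_isOpen isOpen_Ioi ht]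
    exact hderiv_anti.antitoneOn.derivWithin_nonpos
end

section
/- Let N ≥ 2 be an integer, 0 < s1 < 1 with N > 2·s1, let q be real with 2 < q < 2 + 4·s1/N, and let μ, Cq, S > 0. Write 2* = 2N/(N − 2·s1). For a > 0 and ρ > 0 define h(a, ρ) = 1/2 − (1/2*)·S^{−2*/2}·ρ^{4s1/(N − 2s1)} − (μ·Cq/q)·a^{(2N − q(N − 2s1))/(2s1)}·ρ^{(N(q−2) − 4s1)/(2s1)}. Then for each a > 0 the function ρ ↦ h(a, ρ) has a unique critical point on (0, ∞), namely ρ_a = A_μ^{(N − 2s1)·2s1 / (N(2q·s1 − N(q−2)))} · a^{(N − 2s1)/N} where A_μ = (μ·Cq·(4s1 − N(q−2))/(2s1·q)) · (N·S^{2*/2}/(2s1)), this critical point is the strict global maximum point, the maximum value has the form h(a, ρ_a) = 1/2 − K_μ·a^{4s1/N} for a constant K_μ > 0 independent of a, and there exists a₀ = a₀(μ) > 0 (explicitly a₀ = (1/(2K_μ))^{N/(4s1)}) such that max_{ρ>0} h(a, ρ) > 0 if a < a₀, max_{ρ>0} h(a, ρ) = 0 if a = a₀, and max_{ρ>0} h(a,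 ρ) < 0 if a > a₀. -/
/-!
On `(0, ∞)` the function `h a` is `1/2 - B ρ^α - C ρ^β` with `α > 0 > β`, whose derivative is
`ρ^(β-1) (-β C - B α ρ^(α-β))`. The bracket is strictly decreasing in `ρ`, so there is exactly one
critical point and it is a strict global maximum. The constant `Aμ` is exactly the one for which
`ρa = Aμ^(1/(α-β)) a^(γ/(α-β))` solves the critical equation `B α ρ^(α-β) = -β C`, where
`C = (μ Cq / q) a^γ`; substituting gives `h a ρa = 1/2 - B (1 - α/β) ρa^α` with
`ρa^α ∝ a^(4 s1 / N)`.
-/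

open Real Set

noncomputable def powerProfile (c B C α β x : ℝ) : ℝ := c - B * x ^ α - C * x ^ β

section PowerProfile

variable {c B C α β x₀ : ℝ}

lemma hasDerivAt_powerProfile {x : ℝ} (hx : 0 < x) :
    HasDerivAt (powerProfile c B C α β) (x ^ (β - 1) * (-β * C - B * α * x ^ (α - β))) x := by
  have hD : HasDerivAt (fun x => c - B * x ^ α - C * x ^ β)
      (0 - B * (α * x ^ (α - 1)) - C * (β * x ^ (β - 1))) x :=
    ((hasDerivAt_const x c).sub ((hasDerivAt_rpow_const (.inl hx.ne')).const_mul B)).sub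
      ((hasDerivAt_rpow_const (.inl hx.ne')).const_mul C)
  refine hD.congr_deriv ?_
  rw [show α - 1 = (α - β) + (β - 1) by ring, rpow_add hx]
  ring

lemma deriv_powerProfile_of_crit (hcrit : B * α * x₀ ^ (α - β) = -β * C) {x : ℝ} (hx : 0 < x) :
    deriv (powerProfile c B C α β) x = B * α * x ^ (β - 1) * (x₀ ^ (α - β) - x ^ (α - β)) := by
  rw [(hasDerivAt_powerProfile hx).deriv, ← hcrit]
  ring

lemma deriv_powerProfile_eq_zero_iff (hcrit : B * α * x₀ ^ (α - β) = -β * C) (hBα : 0 < B * α)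
    (hβα : β < α) (hx₀ : 0 < x₀) {x : ℝ} (hx : 0 < x) :
    deriv (powerProfile c B C α β) x = 0 ↔ x = x₀ := by
  rw [deriv_powerProfile_of_crit hcrit hx, mul_eq_zero, sub_eq_zero,
    rpow_left_inj hx₀.le hx.le (sub_pos.2 hβα).ne']
  simp [hBα.ne', (rpow_pos_of_pos hx _).ne', eq_comm]

lemma strictMonoOn_powerProfile (hcrit : B * α * x₀ ^ (α - β) = -β * C) (hBα : 0 < B * α)
    (hβα : β < α) : StrictMonoOn (powerProfile c B C α β) (Ioc 0 x₀) := by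
  refine strictMonoOn_of_deriv_pos (convex_Ioc 0 x₀)
    (fun x hx => (hasDerivAt_powerProfile hx.1).continuousAt.continuousWithinAt) ?_
  rw [interior_Ioc]
  rintro x ⟨hx, hxx₀⟩
  rw [deriv_powerProfile_of_crit hcrit hx]
  have := sub_pos.2 (rpow_lt_rpow hx.le hxx₀ (sub_pos.2 hβα))
  have := rpow_pos_of_pos hx (β - 1)
  positivity

lemma strictAntiOn_powerProfile (hcrit : B * α * x₀ ^ (α - β) = -β * C) (hBα : 0 < B * α)
    (hβα : β < α) (hx₀ : 0 < x₀) : StrictAntiOn (powerProfile c B C α β) (Ici x₀) := by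
  refine strictAntiOn_of_deriv_neg (convex_Ici x₀)
    (fun x hx => (hasDerivAt_powerProfile (hx₀.trans_le hx)).continuousAt.continuousWithinAt) ?_
  rw [interior_Ici]
  intro x hx₀x
  have hx : 0 < x := hx₀.trans hx₀x
  rw [deriv_powerProfile_of_crit hcrit hx]
  have := sub_neg.2 (rpow_lt_rpow hx₀.le hx₀x (sub_pos.2 hβα))
  exact mul_neg_of_pos_of_neg (mul_pos hBα (rpow_pos_of_pos hx _)) this

lemma powerProfile_lt_of_ne (hcrit : B * α * x₀ ^ (α - β) = -β * C) (hBα : 0 < B * α)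
    (hβα : β < α) (hx₀ : 0 < x₀) {x : ℝ} (hx : 0 < x) (hne : x ≠ x₀) :
    powerProfile c B C α β x < powerProfile c B C α β x₀ := by
  rcases hne.lt_or_gt with hlt | hgt
  · exact strictMonoOn_powerProfile hcrit hBα hβα ⟨hx, hlt.le⟩ ⟨hx₀, le_rfl⟩ hlt
  · exact strictAntiOn_powerProfile hcrit hBα hβα hx₀ self_mem_Ici hgt.le hgt

lemma critical_point_iff_and_lt_of_eqOn_powerProfile {g : ℝ → ℝ}
    (hg : EqOn g (powerProfile c B C α β) (Ioi 0)) (hcrit : B * α * x₀ ^ (α - β) = -β * C)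
    (hBα : 0 < B * α) (hβα : β < α) (hx₀ : 0 < x₀) :
    (∀ x, 0 < x → (deriv g x = 0 ↔ x = x₀)) ∧ (∀ x, 0 < x → x ≠ x₀ → g x < g x₀) := by
  refine ⟨fun x hx => ?_, fun x hx hne => ?_⟩
  · rw [(hg.eventuallyEq_of_mem (Ioi_mem_nhds hx)).deriv_eq]
    exact deriv_powerProfile_eq_zero_iff hcrit hBα hβα hx₀ hx
  · rw [hg hx, hg hx₀]
    exact powerProfile_lt_of_ne hcrit hBα hβα hx₀ hx hne

lemma powerProfile_of_crit (hcrit : B * α * x₀ ^ (α - β) = -β * C) (hβ : β ≠ 0) (hx₀ : 0 < x₀) :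
    powerProfile c B C α β x₀ = c - B * (1 - α / β) * x₀ ^ α := by
  have hC : C = -(B * α * x₀ ^ (α - β)) / β := by
    rw [hcrit]; field_simp
  rw [powerProfile, hC, rpow_sub hx₀]
  field_simp
  ring

end PowerProfile

lemma half_sub_mul_rpow_trichotomy {K t a : ℝ} (hK : 0 < K) (ht : 0 < t) (ha : 0 ≤ a) :
    (a < (1 / (2 * K)) ^ t⁻¹ → 0 < 1 / 2 - K * a ^ t) ∧
    (a = (1 / (2 * K)) ^ t⁻¹ → 1 / 2 - K * a ^ t = 0) ∧
    ((1 / (2 * K)) ^ t⁻¹ < a → 1 / 2 - K * a ^ t < 0) := by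
  set a₀ := (1 / (2 * K)) ^ t⁻¹
  have ha₀ : 0 ≤ a₀ := by positivity
  have hhalf : 1 / 2 - K * a ^ t = K * (a₀ ^ t - a ^ t) := by
    rw [rpow_inv_rpow (by positivity) ht.ne']
    field_simp
  refine ⟨fun h => ?_, fun h => ?_, fun h => ?_⟩
  · rw [hhalf]; exact mul_pos hK (sub_pos.2 (rpow_lt_rpow ha h ht))
  · rw [hhalf, h, sub_self, mul_zero]
  · rw [hhalf]; exact mul_neg_of_pos_of_neg hK (sub_neg.2 (rpow_lt_rpow ha₀ h ht))

lemma rpow_mul_rpow_rpow {A a : ℝ} (hA : 0 ≤ A) (ha : 0 ≤ a) (e₁ e₂ t : ℝ) :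
    (A ^ e₁ * a ^ e₂) ^ t = A ^ (e₁ * t) * a ^ (e₂ * t) := by
  rw [mul_rpow (rpow_nonneg hA _) (rpow_nonneg ha _), ← rpow_mul hA, ← rpow_mul ha]

section Exponents

variable {N s q : ℝ}

lemma sobolev_sub_gn_exponent (hs : 0 < s) (hNs : 2 * s < N) :
    4 * s / (N - 2 * s) - (N * (q - 2) - 4 * s) / (2 * s) =
      N * (2 * q * s - N * (q - 2)) / (2 * s * (N - 2 * s)) := by
  rw [div_sub_div _ _ (by linarith) (by positivity)]
  ring

lemma crit_exponent_mul_sub (hs : 0 < s) (hNs : 2 * s < N) (hD : 0 < 2 * q * s - N * (q - 2)) :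
    (N - 2 * s) * 2 * s / (N * (2 * q * s - N * (q - 2))) *
      (4 * s / (N - 2 * s) - (N * (q - 2) - 4 * s) / (2 * s)) = 1 := by
  have : 0 < N := by linarith
  have : 0 < N - 2 * s := by linarith
  rw [sobolev_sub_gn_exponent hs hNs, div_mul_div_comm, div_eq_one_iff_eq (by positivity)]
  ring

lemma radius_exponent_mul_sub (hs : 0 < s) (hNs : 2 * s < N) :
    (N - 2 * s) / N * (4 * s / (N - 2 * s) - (N * (q - 2) - 4 * s) / (2 * s)) =
      (2 * N - q * (N - 2 * s)) / (2 * s) := by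
  have : N ≠ 0 := by linarith
  have : N - 2 * s ≠ 0 := by linarith
  rw [sobolev_sub_gn_exponent hs hNs]
  field_simp
  ring

lemma radius_exponent_mul_sobolev (hNs : 2 * s < N) :
    (N - 2 * s) / N * (4 * s / (N - 2 * s)) = 4 * s / N := by
  have : N - 2 * s ≠ 0 := by linarith
  field_simp

lemma sobolev_coeff_mul_Aμ (μ Cq : ℝ) {S : ℝ} (hs : 0 < s) (hNs : 2 * s < N) (hq : q ≠ 0)
    (hS : 0 < S) :
    1 / (2 * N / (N - 2 * s)) * S ^ (-(2 * N / (N - 2 * s)) / 2) * (4 * s / (N - 2 * s)) *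
      (μ * Cq * (4 * s - N * (q - 2)) / (2 * s * q) * (N * S ^ (2 * N / (N - 2 * s) / 2) / (2 * s))) =
    -((N * (q - 2) - 4 * s) / (2 * s)) * (μ * Cq / q) := by
  have : N ≠ 0 := by linarith
  have : N - 2 * s ≠ 0 := by linarith
  rw [neg_div, rpow_neg hS.le]
  field_simp
  ring

end Exponents

theorem stmt7_general
    (N : ℕ) (s1 : ℝ) (hs1 : 0 < s1)
    (hNs1 : 2 * s1 < (N : ℝ))
    (q : ℝ) (hq : 2 < q) (hq' : q < 2 + 4 * s1 / N)
    (μ Cq S : ℝ) (hμ : 0 < μ) (hCq : 0 < Cq) (hS : 0 < S)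
    (h : ℝ → ℝ → ℝ)
    (hh : ∀ a ρ : ℝ, 0 < a → 0 < ρ → h a ρ = 1 / 2
        - (1 / (2 * N / (N - 2 * s1))) * S ^ (-(2 * N / (N - 2 * s1)) / 2) *
            ρ ^ (4 * s1 / (N - 2 * s1))
        - (μ * Cq / q) * a ^ ((2 * N - q * (N - 2 * s1)) / (2 * s1)) *
            ρ ^ ((N * (q - 2) - 4 * s1) / (2 * s1)))
    (Aμ : ℝ)
    (hAμ : Aμ = (μ * Cq * (4 * s1 - N * (q - 2)) / (2 * s1 * q)) *
        (N * S ^ ((2 * N / (N - 2 * s1)) / 2) / (2 * s1))) :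
    ∃ Kμ : ℝ, 0 < Kμ ∧
      ∀ a : ℝ, 0 < a →
        let ρa : ℝ := Aμ ^ ((N - 2 * s1) * 2 * s1 / (N * (2 * q * s1 - N * (q - 2)))) *
            a ^ ((N - 2 * s1) / N)
        (0 < ρa) ∧
        (∀ ρ : ℝ, 0 < ρ → (deriv (fun r => h a r) ρ = 0 ↔ ρ = ρa)) ∧
        (∀ ρ : ℝ, 0 < ρ → ρ ≠ ρa → h a ρ < h a ρa) ∧
        h a ρa = 1 / 2 - Kμ * a ^ (4 * s1 / N) ∧
        (a < (1 / (2 * Kμ)) ^ ((N : ℝ) / (4 * s1)) → 0 < h a ρa) ∧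
        (a = (1 / (2 * Kμ)) ^ ((N : ℝ) / (4 * s1)) → h a ρa = 0) ∧
        ((1 / (2 * Kμ)) ^ ((N : ℝ) / (4 * s1)) < a → h a ρa < 0) := by
  have hN : (0 : ℝ) < N := by linarith
  have hNs : (0 : ℝ) < N - 2 * s1 := by linarith
  have hgap : (N : ℝ) * (q - 2) < 4 * s1 := by
    rwa [← sub_lt_iff_lt_add', lt_div_iff₀' hN] at hq'
  have hD : 0 < 2 * q * s1 - N * (q - 2) := by nlinarith
  have he₁ := crit_exponent_mul_sub hs1 hNs1 hD
  have he₂ := radius_exponent_mul_sub (q := q) hs1 hNs1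
  have he₂α := radius_exponent_mul_sobolev hNs1
  have hBαAμ := hAμ ▸ sobolev_coeff_mul_Aμ μ Cq hs1 hNs1 (by positivity) hS
  have hAμ0 : 0 < Aμ := by rw [hAμ]; have := sub_pos.2 hgap; positivity
  set α := 4 * s1 / ((N : ℝ) - 2 * s1)
  set β := ((N : ℝ) * (q - 2) - 4 * s1) / (2 * s1)
  set γ := (2 * (N : ℝ) - q * (N - 2 * s1)) / (2 * s1)
  set B := 1 / (2 * (N : ℝ) / (N - 2 * s1)) * S ^ (-(2 * (N : ℝ) / (N - 2 * s1)) / 2)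
  set e₁ := ((N : ℝ) - 2 * s1) * 2 * s1 / (N * (2 * q * s1 - N * (q - 2)))
  have hα : 0 < α := by positivity
  have hβ : β < 0 := div_neg_of_neg_of_pos (by linarith) (by positivity)
  have hB : 0 < B := by positivity
  have hK : 0 < B * (1 - α / β) * Aμ ^ (e₁ * α) :=
    mul_pos (mul_pos hB (by linarith [div_neg_of_pos_of_neg hα hβ])) (rpow_pos_of_pos hAμ0 _)
  refine ⟨B * (1 - α / β) * Aμ ^ (e₁ * α), hK, fun a ha => ?_⟩
  intro ρa
  have hρa : 0 < ρa := by positivity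
  have hprofile : EqOn (h a) (powerProfile (1 / 2) B (μ * Cq / q * a ^ γ) α β) (Ioi 0) :=
    fun ρ hρ => hh a ρ ha hρ
  have hcrit : B * α * ρa ^ (α - β) = -β * (μ * Cq / q * a ^ γ) := by
    rw [rpow_mul_rpow_rpow hAμ0.le ha.le, he₁, he₂, rpow_one]
    linear_combination a ^ γ * hBαAμ
  have hval : h a ρa = 1 / 2 - B * (1 - α / β) * Aμ ^ (e₁ * α) * a ^ (4 * s1 / N) := by
    rw [hprofile hρa, powerProfile_of_crit hcrit hβ.ne hρa, rpow_mul_rpow_rpow hAμ0.le ha.le, he₂α]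
    ring
  obtain ⟨hderiv, hmax⟩ :=
    critical_point_iff_and_lt_of_eqOn_powerProfile hprofile hcrit (mul_pos hB hα) (by linarith) hρa
  rw [← inv_div (4 * s1)]
  exact ⟨hρa, hderiv, hmax, hval, hval ▸ half_sub_mul_rpow_trichotomy hK (by positivity) ha.le⟩

theorem stmt7
    (N : ℕ) (hN : 2 ≤ N) (s1 : ℝ) (hs1 : 0 < s1) (hs1' : s1 < 1)
    (hNs1 : 2 * s1 < (N : ℝ))
    (q : ℝ) (hq : 2 < q) (hq' : q < 2 + 4 * s1 / N)
    (μ Cq S : ℝ) (hμ : 0 < μ) (hCq : 0 < Cq) (hS : 0 < S)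
    (h : ℝ → ℝ → ℝ)
    (hh : ∀ a ρ : ℝ, 0 < a → 0 < ρ → h a ρ = 1 / 2
        - (1 / (2 * N / (N - 2 * s1))) * S ^ (-(2 * N / (N - 2 * s1)) / 2) *
            ρ ^ (4 * s1 / (N - 2 * s1))
        - (μ * Cq / q) * a ^ ((2 * N - q * (N - 2 * s1)) / (2 * s1)) *
            ρ ^ ((N * (q - 2) - 4 * s1) / (2 * s1)))
    (Aμ : ℝ)
    (hAμ : Aμ = (μ * Cq * (4 * s1 - N * (q - 2)) / (2 * s1 * q)) *
        (N * S ^ ((2 * N / (N - 2 * s1)) / 2) / (2 * s1))) :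
    ∃ Kμ : ℝ, 0 < Kμ ∧
      ∀ a : ℝ, 0 < a →
        let ρa : ℝ := Aμ ^ ((N - 2 * s1) * 2 * s1 / (N * (2 * q * s1 - N * (q - 2)))) *
            a ^ ((N - 2 * s1) / N)
        (0 < ρa) ∧
        (∀ ρ : ℝ, 0 < ρ → (deriv (fun r => h a r) ρ = 0 ↔ ρ = ρa)) ∧
        (∀ ρ : ℝ, 0 < ρ → ρ ≠ ρa → h a ρ < h a ρa) ∧
        h a ρa = 1 / 2 - Kμ * a ^ (4 * s1 / N) ∧
        (a < (1 / (2 * Kμ)) ^ ((N : ℝ) / (4 * s1)) → 0 < h a ρa) ∧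
        (a = (1 / (2 * Kμ)) ^ ((N : ℝ) / (4 * s1)) → h a ρa = 0) ∧
        ((1 / (2 * Kμ)) ^ ((N : ℝ) / (4 * s1)) < a → h a ρa < 0) :=
  stmt7_general N s1 hs1 hNs1 q hq hq' μ Cq S hμ hCq hS h hh Aμ hAμ
end

section
/- Let N ≥ 2 be an integer, 0 < s1 < 1 with N > 2·s1, let q be real with 2 < q < 2 + 4·s1/N, and let μ, Cq, S > 0. Write 2* = 2N/(N − 2·s1) and, for a > 0, ρ > 0, h(a, ρ) = 1/2 − (1/2*)·S^{−2*/2}·ρ^{4s1/(N − 2s1)} − (μ·Cq/q)·a^{(2N − q(N − 2s1))/(2s1)}·ρ^{(N(q−2) − 4s1)/(2s1)}. Let (a₁, ρ₁) ∈ (0,∞) × (0,∞) be such that h(a₁, ρ₁) ≥ 0. Then for every a₂ ∈ (0, a₁] and every ρ₂ ∈ [(a₂/a₁)·ρ₁, ρ₁], one has h(a₂, ρ₂) ≥ 0. -/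
open Real

/-- Scaling inequality: for `t = a₂ / a₁ ≤ 1`, `a₂ ^ β * (t * ρ₁) ^ γ = t ^ (β + γ) * a₁ ^ β * ρ₁ ^ γ`,
and lowering `ρ₂` to `t * ρ₁` only increases `ρ₂ ^ γ` when `γ ≤ 0`. -/
lemma rpow_mul_rpow_le_of_div_mul_le {a₁ a₂ ρ₁ ρ₂ β γ : ℝ} (ha₂ : 0 < a₂) (ha₂₁ : a₂ ≤ a₁)
    (hρ₁ : 0 < ρ₁) (hρ₂ : a₂ / a₁ * ρ₁ ≤ ρ₂) (hγ : γ ≤ 0) (hβγ : 0 ≤ β + γ) :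
    a₂ ^ β * ρ₂ ^ γ ≤ a₁ ^ β * ρ₁ ^ γ := by
  have ha₁ : 0 < a₁ := ha₂.trans_le ha₂₁
  set t := a₂ / a₁ with ht
  have ht0 : 0 < t := div_pos ha₂ ha₁
  have ht1 : t ≤ 1 := (div_le_one ha₁).mpr ha₂₁
  have ha₂_eq : a₂ = a₁ * t := by rw [ht, mul_div_cancel₀ _ ha₁.ne']
  calc a₂ ^ β * ρ₂ ^ γ ≤ a₂ ^ β * (t * ρ₁) ^ γ :=
        mul_le_mul_of_nonneg_left (rpow_le_rpow_of_nonpos (by positivity) hρ₂ hγ) (by positivity)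
    _ = a₁ ^ β * ρ₁ ^ γ * t ^ (β + γ) := by
        rw [ha₂_eq, mul_rpow ha₁.le ht0.le, mul_rpow ht0.le hρ₁.le, rpow_add ht0]
        ring
    _ ≤ a₁ ^ β * ρ₁ ^ γ :=
        mul_le_of_le_one_right (by positivity) (rpow_le_one ht0.le ht1 hβγ)

lemma sub_sub_rpow_le_sub_sub_rpow {c A B α β γ a₁ a₂ ρ₁ ρ₂ : ℝ} (hA : 0 ≤ A) (hB : 0 ≤ B)
    (hα : 0 ≤ α) (hγ : γ ≤ 0) (hβγ : 0 ≤ β + γ) (ha₂ : 0 < a₂) (ha₂₁ : a₂ ≤ a₁)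
    (hρ₁ : 0 < ρ₁) (hρ₂ : a₂ / a₁ * ρ₁ ≤ ρ₂) (hρ₂₁ : ρ₂ ≤ ρ₁) :
    c - A * ρ₁ ^ α - B * a₁ ^ β * ρ₁ ^ γ ≤ c - A * ρ₂ ^ α - B * a₂ ^ β * ρ₂ ^ γ := by
  have hρ₂_pos : 0 < ρ₂ := lt_of_lt_of_le (by positivity [ha₂.trans_le ha₂₁]) hρ₂
  have hfirst : A * ρ₂ ^ α ≤ A * ρ₁ ^ α := by gcongr
  have hsecond : B * (a₂ ^ β * ρ₂ ^ γ) ≤ B * (a₁ ^ β * ρ₁ ^ γ) :=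
    mul_le_mul_of_nonneg_left (rpow_mul_rpow_le_of_div_mul_le ha₂ ha₂₁ hρ₁ hρ₂ hγ hβγ) hB
  simp only [mul_assoc] at hsecond ⊢
  linarith

theorem stmt8_general
    (N : ℕ) (s1 : ℝ) (hs1 : 0 < s1)
    (hNs1 : 2 * s1 < (N : ℝ))
    (q : ℝ) (hq : 2 < q) (hq' : q < 2 + 4 * s1 / N)
    (μ Cq S : ℝ) (hμ : 0 < μ) (hCq : 0 < Cq) (hS : 0 < S)
    (h : ℝ → ℝ → ℝ)
    (hh : ∀ a ρ : ℝ, 0 < a → 0 < ρ → h a ρ = 1 / 2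
        - (1 / (2 * N / (N - 2 * s1))) * S ^ (-(2 * N / (N - 2 * s1)) / 2) *
            ρ ^ (4 * s1 / (N - 2 * s1))
        - (μ * Cq / q) * a ^ ((2 * N - q * (N - 2 * s1)) / (2 * s1)) *
            ρ ^ ((N * (q - 2) - 4 * s1) / (2 * s1)))
    (a₁ ρ₁ : ℝ) (ha₁ : 0 < a₁) (hρ₁ : 0 < ρ₁) (hpos : 0 ≤ h a₁ ρ₁) :
    ∀ a₂ : ℝ, 0 < a₂ → a₂ ≤ a₁ →
      ∀ ρ₂ : ℝ, (a₂ / a₁) * ρ₁ ≤ ρ₂ → ρ₂ ≤ ρ₁ → 0 ≤ h a₂ ρ₂ := by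
  intro a₂ ha₂ ha₂₁ ρ₂ hρ₂ hρ₂₁
  have hN : (0 : ℝ) < N := by linarith
  have hNs : 0 < (N : ℝ) - 2 * s1 := by linarith
  have hγ : (N * (q - 2) - 4 * s1) / (2 * s1) ≤ 0 := by
    have : (q - 2) * N < 4 * s1 := (lt_div_iff₀ hN).mp (by linarith)
    exact div_nonpos_of_nonpos_of_nonneg (by linarith) (by positivity)
  have hβγ : (2 * N - q * (N - 2 * s1)) / (2 * s1) + (N * (q - 2) - 4 * s1) / (2 * s1)
      = q - 2 := by
    field_simp
    ring
  rw [hh a₂ ρ₂ ha₂ (lt_of_lt_of_le (by positivity) hρ₂)]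
  rw [hh a₁ ρ₁ ha₁ hρ₁] at hpos
  refine hpos.trans (sub_sub_rpow_le_sub_sub_rpow ?_ (by positivity) (by positivity) hγ
    (by linarith) ha₂ ha₂₁ hρ₁ hρ₂ hρ₂₁)
  have : 0 < 2 * (N : ℝ) / (N - 2 * s1) := by positivity
  positivity

theorem stmt8
    (N : ℕ) (hN : 2 ≤ N) (s1 : ℝ) (hs1 : 0 < s1) (hs1' : s1 < 1)
    (hNs1 : 2 * s1 < (N : ℝ))
    (q : ℝ) (hq : 2 < q) (hq' : q < 2 + 4 * s1 / N)
    (μ Cq S : ℝ) (hμ : 0 < μ) (hCq : 0 < Cq) (hS : 0 < S)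
    (h : ℝ → ℝ → ℝ)
    (hh : ∀ a ρ : ℝ, 0 < a → 0 < ρ → h a ρ = 1 / 2
        - (1 / (2 * N / (N - 2 * s1))) * S ^ (-(2 * N / (N - 2 * s1)) / 2) *
            ρ ^ (4 * s1 / (N - 2 * s1))
        - (μ * Cq / q) * a ^ ((2 * N - q * (N - 2 * s1)) / (2 * s1)) *
            ρ ^ ((N * (q - 2) - 4 * s1) / (2 * s1)))
    (a₁ ρ₁ : ℝ) (ha₁ : 0 < a₁) (hρ₁ : 0 < ρ₁) (hpos : 0 ≤ h a₁ ρ₁) :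
    ∀ a₂ : ℝ, 0 < a₂ → a₂ ≤ a₁ →
      ∀ ρ₂ : ℝ, (a₂ / a₁) * ρ₁ ≤ ρ₂ → ρ₂ ≤ ρ₁ → 0 ≤ h a₂ ρ₂ :=
  stmt8_general N s1 hs1 hNs1 q hq hq' μ Cq S hμ hCq hS h hh a₁ ρ₁ ha₁ hρ₁ hpos
end
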